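/- arXiv:1803.00841 — 5 statements merged into one kernel-verified Lean document; each statement's English description precedes it below -/
import Mathlib

section
/- Let A be a symmetric positive definite d×d real matrix, B a symmetric positive semidefinite d×d real matrix, b ∈ ℝ^d, and β = A⁻¹·(A β) arbitrary in ℝ^d. If 0 ≤ λ_max(A − B) < (1/2)·λ_min(A), then B is invertible and ‖B⁻¹b − β‖ ≤ [λ_min(A)⁻¹ + 2·λ_min(A)⁻²·λ_max(A − B)]·‖b − Bβ‖. -/
open MeasureTheory ProbabilityTheory Matrix

/-!
Expanding `x` in an orthonormal eigenbasis of a symmetric matrix `M` gives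
`x ⬝ᵥ M x = ∑ λᵢ cᵢ²` and `x ⬝ᵥ x = ∑ cᵢ²`, so the quadratic form of `M` lies between
`λ_min(M)‖x‖²` and `λ_max(M)‖x‖²`. Applied to `A` and to `A − B` this shows that `B` is coercive,
`x ⬝ᵥ B x ≥ (λ_min(A) − λ_max(A − B))‖x‖²`; hence `B` is injective, and Cauchy–Schwarz turns
coercivity into `‖y‖ ≤ (λ_min(A) − λ_max(A − B))⁻¹ ‖B y‖`, used with `y = B⁻¹b − β`.
The constant is then expanded with `(1 − x)⁻¹ ≤ 1 + 2x` for `0 ≤ x ≤ 1/2`.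
-/

/-- Largest eigenvalue of a (Hermitian) real matrix. -/
noncomputable def lamMax {d : ℕ} (M : Matrix (Fin d) (Fin d) ℝ) : ℝ :=
  if h : M.IsHermitian then ⨆ i, h.eigenvalues i else 0

/-- Smallest eigenvalue of a (Hermitian) real matrix. -/
noncomputable def lamMin {d : ℕ} (M : Matrix (Fin d) (Fin d) ℝ) : ℝ :=
  if h : M.IsHermitian then ⨅ i, h.eigenvalues i else 0

/-- Euclidean norm of a vector in ℝ^d. -/
noncomputable def euclNorm {d : ℕ} (v : Fin d → ℝ) : ℝ := Real.sqrt (∑ i, v i ^ 2)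

lemma Matrix.dotProduct_eq_inner_toLp {n : Type*} [Fintype n] (v w : n → ℝ) :
    v ⬝ᵥ w = inner ℝ (WithLp.toLp 2 v) (WithLp.toLp 2 w) := by
  rw [EuclideanSpace.inner_toLp_toLp, star_trivial, dotProduct_comm]

lemma OrthonormalBasis.dotProduct_eq_sum {n : Type*} [Fintype n]
    (b : OrthonormalBasis n ℝ (EuclideanSpace ℝ n)) (v w : n → ℝ) :
    v ⬝ᵥ w = ∑ i, (⇑(b i) ⬝ᵥ v) * (⇑(b i) ⬝ᵥ w) := by
  rw [dotProduct_eq_inner_toLp, ← b.sum_inner_mul_inner]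
  refine Finset.sum_congr rfl fun i _ => ?_
  rw [real_inner_comm, dotProduct_eq_inner_toLp, dotProduct_eq_inner_toLp, WithLp.toLp_ofLp]

lemma OrthonormalBasis.dotProduct_self_eq_sum_sq {n : Type*} [Fintype n]
    (b : OrthonormalBasis n ℝ (EuclideanSpace ℝ n)) (v : n → ℝ) :
    v ⬝ᵥ v = ∑ i, (⇑(b i) ⬝ᵥ v) ^ 2 := by
  simp only [sq, ← b.dotProduct_eq_sum]

namespace Matrix.IsHermitian

variable {n : Type*} [Fintype n] [DecidableEq n] {M : Matrix n n ℝ} (hM : M.IsHermitian)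

lemma eigenvectorBasis_dotProduct_mulVec (i : n) (x : n → ℝ) :
    ⇑(hM.eigenvectorBasis i) ⬝ᵥ (M *ᵥ x) = hM.eigenvalues i * (⇑(hM.eigenvectorBasis i) ⬝ᵥ x) := by
  have hMt : Mᵀ = M := isHermitian_iff_isSymm.mp hM
  rw [dotProduct_mulVec, ← mulVec_transpose, hMt, mulVec_eigenvectorBasis, smul_dotProduct,
    smul_eq_mul]

lemma dotProduct_mulVec_eq_sum (x : n → ℝ) :
    x ⬝ᵥ (M *ᵥ x) = ∑ i, hM.eigenvalues i * (⇑(hM.eigenvectorBasis i) ⬝ᵥ x) ^ 2 := by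
  simp only [hM.eigenvectorBasis.dotProduct_eq_sum x, eigenvectorBasis_dotProduct_mulVec hM]
  exact Finset.sum_congr rfl fun i _ => by ring

lemma iInf_eigenvalues_mul_le (x : n → ℝ) :
    (⨅ i, hM.eigenvalues i) * (x ⬝ᵥ x) ≤ x ⬝ᵥ (M *ᵥ x) := by
  rw [hM.dotProduct_mulVec_eq_sum, hM.eigenvectorBasis.dotProduct_self_eq_sum_sq, Finset.mul_sum]
  gcongr with i
  exact ciInf_le (Set.finite_range _).bddBelow i

lemma le_iSup_eigenvalues_mul (x : n → ℝ) :
    x ⬝ᵥ (M *ᵥ x) ≤ (⨆ i, hM.eigenvalues i) * (x ⬝ᵥ x) := by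
  rw [hM.dotProduct_mulVec_eq_sum, hM.eigenvectorBasis.dotProduct_self_eq_sum_sq, Finset.mul_sum]
  gcongr with i
  exact le_ciSup (Set.finite_range _).bddAbove i

end Matrix.IsHermitian

lemma Matrix.det_ne_zero_of_coercive {n : Type*} [Fintype n] [DecidableEq n] {B : Matrix n n ℝ}
    {c : ℝ} (hc : 0 < c) (hB : ∀ x, c * (x ⬝ᵥ x) ≤ x ⬝ᵥ (B *ᵥ x)) : B.det ≠ 0 := by
  rw [Ne, ← exists_mulVec_eq_zero_iff]
  rintro ⟨x, hx, hBx⟩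
  have hpos : 0 < x ⬝ᵥ x := by simpa using dotProduct_self_star_pos_iff.mpr hx
  have hle := hB x
  rw [hBx, dotProduct_zero] at hle
  exact hle.not_gt (mul_pos hc hpos)

section FinDim

variable {d : ℕ}

lemma euclNorm_eq_norm (v : Fin d → ℝ) : euclNorm v = ‖WithLp.toLp 2 v‖ := by
  simp [euclNorm, EuclideanSpace.norm_eq]

lemma euclNorm_nonneg (v : Fin d → ℝ) : 0 ≤ euclNorm v := Real.sqrt_nonneg _

lemma euclNorm_sq (v : Fin d → ℝ) : euclNorm v ^ 2 = v ⬝ᵥ v := by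
  rw [euclNorm_eq_norm, dotProduct_eq_inner_toLp, real_inner_self_eq_norm_sq]

lemma dotProduct_le_euclNorm_mul (v w : Fin d → ℝ) :
    v ⬝ᵥ w ≤ euclNorm v * euclNorm w := by
  rw [euclNorm_eq_norm, euclNorm_eq_norm, dotProduct_eq_inner_toLp]
  exact real_inner_le_norm _ _

lemma lamMin_mul_dotProduct_le {M : Matrix (Fin d) (Fin d) ℝ} (hM : M.IsHermitian)
    (x : Fin d → ℝ) :
    lamMin M * (x ⬝ᵥ x) ≤ x ⬝ᵥ (M *ᵥ x) := by
  rw [lamMin, dif_pos hM]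
  exact hM.iInf_eigenvalues_mul_le x

lemma dotProduct_mulVec_le_lamMax_mul {M : Matrix (Fin d) (Fin d) ℝ} (hM : M.IsHermitian)
    (x : Fin d → ℝ) :
    x ⬝ᵥ (M *ᵥ x) ≤ lamMax M * (x ⬝ᵥ x) := by
  rw [lamMax, dif_pos hM]
  exact hM.le_iSup_eigenvalues_mul x

lemma lamMin_sub_lamMax_sub_mul_dotProduct_le {A B : Matrix (Fin d) (Fin d) ℝ}
    (hA : A.IsHermitian) (hB : B.IsHermitian) (x : Fin d → ℝ) :
    (lamMin A - lamMax (A - B)) * (x ⬝ᵥ x) ≤ x ⬝ᵥ (B *ᵥ x) := by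
  have hAmin := lamMin_mul_dotProduct_le hA x
  have hABmax := dotProduct_mulVec_le_lamMax_mul (hA.sub hB) x
  rw [sub_mulVec, dotProduct_sub] at hABmax
  linarith

lemma mul_euclNorm_le_of_coercive {B : Matrix (Fin d) (Fin d) ℝ} {c : ℝ}
    (hB : ∀ x, c * (x ⬝ᵥ x) ≤ x ⬝ᵥ (B *ᵥ x)) (y : Fin d → ℝ) :
    c * euclNorm y ≤ euclNorm (B *ᵥ y) := by
  rcases (euclNorm_nonneg y).eq_or_lt with hy | hy
  · rw [← hy, mul_zero]; exact euclNorm_nonneg _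
  refine le_of_mul_le_mul_right ?_ hy
  calc c * euclNorm y * euclNorm y = c * (y ⬝ᵥ y) := by rw [← euclNorm_sq]; ring
    _ ≤ y ⬝ᵥ (B *ᵥ y) := hB y
    _ ≤ euclNorm y * euclNorm (B *ᵥ y) := dotProduct_le_euclNorm_mul _ _
    _ = euclNorm (B *ᵥ y) * euclNorm y := mul_comm _ _

end FinDim

lemma inv_sub_le_inv_add_two_mul {l ε : ℝ} (hε : 0 ≤ ε) (hl : 2 * ε < l) :
    (l - ε)⁻¹ ≤ l⁻¹ + 2 * (l ^ 2)⁻¹ * ε := by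
  have hl0 : 0 < l := by linarith
  rw [show l⁻¹ + 2 * (l ^ 2)⁻¹ * ε = (l + 2 * ε) / l ^ 2 by field_simp, inv_eq_one_div,
    div_le_div_iff₀ (by linarith) (by positivity)]
  nlinarith [mul_nonneg hε (by linarith : (0:ℝ) ≤ l - 2 * ε)]

/-- If `A` is symmetric positive definite, `B` symmetric positive semidefinite,
`0 ≤ λ_max(A − B) < (1/2)·λ_min(A)`, then `B` is invertible and
`‖B⁻¹b − β‖ ≤ [λ_min(A)⁻¹ + 2·λ_min(A)⁻²·λ_max(A − B)]·‖b − Bβ‖`. -/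
theorem stmt2 {d : ℕ} (A B : Matrix (Fin d) (Fin d) ℝ)
    (hA : A.PosDef) (hB : B.PosSemidef) (b β : Fin d → ℝ)
    (h0 : 0 ≤ lamMax (A - B)) (h : lamMax (A - B) < (1 / 2) * lamMin A) :
    IsUnit B.det ∧
      euclNorm (B⁻¹ *ᵥ b - β) ≤
        ((lamMin A)⁻¹ + 2 * ((lamMin A) ^ 2)⁻¹ * lamMax (A - B)) * euclNorm (b - B *ᵥ β) := by
  have hcoer := lamMin_sub_lamMax_sub_mul_dotProduct_le hA.isHermitian hB.isHermitian
  have hdet : IsUnit B.det := (det_ne_zero_of_coercive (by linarith) hcoer).isUnit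
  have hBy : B *ᵥ (B⁻¹ *ᵥ b - β) = b - B *ᵥ β := by
    rw [mulVec_sub, mulVec_mulVec, mul_nonsing_inv B hdet, one_mulVec]
  refine ⟨hdet, ?_⟩
  calc euclNorm (B⁻¹ *ᵥ b - β)
      ≤ (lamMin A - lamMax (A - B))⁻¹ * euclNorm (b - B *ᵥ β) := by
        rw [← hBy, inv_mul_eq_div, le_div_iff₀ (by linarith), mul_comm]
        exact mul_euclNorm_le_of_coercive hcoer _
    _ ≤ _ := mul_le_mul_of_nonneg_right (inv_sub_le_inv_add_two_mul h0 (by linarith))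
        (euclNorm_nonneg _)
end

section
/- Define the random symmetric matrix Δ = (1/n)·Σ_{i=1}^n (1 − γ_i/p_i)·x_i x_iᵀ. Then E[Δ²] = (1/n²)·Σ_{i=1}^n (1/p_i − 1)·(x_i x_iᵀ)², and consequently λ_max(E[Δ²]) ≤ (1/r)·(1/n²)·Σ_{i=1}^n π_i⁻¹·‖x_i‖⁴ = σ_Σ²/r, where σ_Σ² = (1/n²)Σ_i π_i⁻¹‖x_i‖⁴. -/
/-!
The coefficients `a_i = 1 - γ_i / p_i` are centred, independent, and satisfy
`E[a_i ^ 2] = 1/p_i - 1` because `γ_i ^ 2 = γ_i`; so in the expansion of `Δ²` only the diagonal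
terms `a_i ^ 2 (x_i x_iᵀ)²` survive in expectation. Since `(x_i x_iᵀ)² = ‖x_i‖² x_i x_iᵀ`, the
quadratic form of `E[Δ²]` at a vector `v` is `n⁻² Σ_i (1/p_i - 1) ‖x_i‖² ⟪x_i, v⟫²`, which
Cauchy–Schwarz bounds by `n⁻² Σ_i p_i⁻¹ ‖x_i‖⁴ ‖v‖² = σ_Σ² ‖v‖² / r`.
-/

open MeasureTheory ProbabilityTheory Matrix

lemma Set.indicator_one_eq_of_forall_eq_zero_or_eq_one {α : Type*} {f : α → ℝ}
    (h01 : ∀ a, f a = 0 ∨ f a = 1) : {a | f a = 1}.indicator 1 = f := by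
  funext a
  rcases h01 a with h | h <;> simp [h]

lemma abs_one_sub_div_le {t p : ℝ} (ht : t = 0 ∨ t = 1) (hp : 0 < p) :
    |1 - t / p| ≤ 1 + p⁻¹ := by
  rcases ht with rfl | rfl
  · simp [hp.le]
  · simpa [abs_of_pos hp] using abs_sub (1 : ℝ) (1 / p)

section Bernoulli

variable {Ω : Type*} [MeasurableSpace Ω] {μ : Measure Ω} {γ : Ω → ℝ} {p : ℝ}

lemma integrable_of_forall_eq_zero_or_eq_one [IsFiniteMeasure μ] (hγ : Measurable γ)
    (h01 : ∀ ω, γ ω = 0 ∨ γ ω = 1) : Integrable γ μ := by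
  rw [← Set.indicator_one_eq_of_forall_eq_zero_or_eq_one h01]
  exact (integrable_const 1).indicator (hγ (measurableSet_singleton 1))

lemma integral_eq_of_bernoulli (hγ : Measurable γ) (h01 : ∀ ω, γ ω = 0 ∨ γ ω = 1)
    (hp : 0 ≤ p) (hBer : μ {ω | γ ω = 1} = ENNReal.ofReal p) : ∫ ω, γ ω ∂μ = p := by
  rw [← Set.indicator_one_eq_of_forall_eq_zero_or_eq_one h01,
    integral_indicator_one (s := {ω | γ ω = 1}) (hγ (measurableSet_singleton 1)),
    measureReal_def, hBer, ENNReal.toReal_ofReal hp]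

variable [IsProbabilityMeasure μ]

lemma integral_one_sub_div_eq_zero (hγ : Measurable γ) (h01 : ∀ ω, γ ω = 0 ∨ γ ω = 1)
    (hp : 0 < p) (hBer : μ {ω | γ ω = 1} = ENNReal.ofReal p) :
    ∫ ω, 1 - γ ω / p ∂μ = 0 := by
  have hint : Integrable (fun ω => γ ω / p) μ :=
    (integrable_of_forall_eq_zero_or_eq_one hγ h01).div_const p
  rw [integral_sub (integrable_const 1) hint, integral_div, integral_eq_of_bernoulli hγ h01 hp.le hBer]
  simp [hp.ne']

lemma integral_one_sub_div_sq (hγ : Measurable γ) (h01 : ∀ ω, γ ω = 0 ∨ γ ω = 1)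
    (hp : 0 < p) (hBer : μ {ω | γ ω = 1} = ENNReal.ofReal p) :
    ∫ ω, (1 - γ ω / p) ^ 2 ∂μ = p⁻¹ - 1 := by
  -- `γ ^ 2 = γ` makes the square affine in `γ`
  have hsq : ∀ ω, (1 - γ ω / p) ^ 2 = (1 - γ ω / p) + (p⁻¹ - 1) * (γ ω / p) := fun ω => by
    rcases h01 ω with h | h <;> simp only [h] <;> ring
  have hint : Integrable (fun ω => γ ω / p) μ :=
    (integrable_of_forall_eq_zero_or_eq_one hγ h01).div_const p
  have hint' : Integrable (fun ω => 1 - γ ω / p) μ := (integrable_const 1).sub hint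
  simp_rw [hsq]
  rw [integral_add hint' (hint.const_mul _),
    integral_one_sub_div_eq_zero hγ h01 hp hBer, integral_const_mul, integral_div,
    integral_eq_of_bernoulli hγ h01 hp.le hBer, div_self hp.ne']
  ring

variable {ι : Type*} {γ : ι → Ω → ℝ} {p : ι → ℝ}

lemma integrable_one_sub_div_mul_one_sub_div (hγ : ∀ i, Measurable (γ i))
    (h01 : ∀ i ω, γ i ω = 0 ∨ γ i ω = 1) (hp : ∀ i, 0 < p i) (i i' : ι) :
    Integrable (fun ω => (1 - γ i ω / p i) * (1 - γ i' ω / p i')) μ := by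
  refine Integrable.of_bound (by fun_prop) ((1 + (p i)⁻¹) * (1 + (p i')⁻¹))
    (Filter.Eventually.of_forall fun ω => ?_)
  rw [norm_mul, Real.norm_eq_abs, Real.norm_eq_abs]
  exact mul_le_mul (abs_one_sub_div_le (h01 i ω) (hp i))
    (abs_one_sub_div_le (h01 i' ω) (hp i')) (abs_nonneg _)
    (by linarith [inv_pos.2 (hp i)])

lemma integral_one_sub_div_mul_one_sub_div [DecidableEq ι] (hγ : ∀ i, Measurable (γ i))
    (h01 : ∀ i ω, γ i ω = 0 ∨ γ i ω = 1) (hp : ∀ i, 0 < p i)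
    (hBer : ∀ i, μ {ω | γ i ω = 1} = ENNReal.ofReal (p i)) (hind : iIndepFun γ μ) (i i' : ι) :
    ∫ ω, (1 - γ i ω / p i) * (1 - γ i' ω / p i') ∂μ = if i = i' then (p i)⁻¹ - 1 else 0 := by
  split_ifs with h
  · subst h
    simp_rw [← sq]
    exact integral_one_sub_div_sq (hγ i) (h01 i) (hp i) (hBer i)
  · have hφ : ∀ q : ℝ, Measurable fun t : ℝ => 1 - t / q := fun q => by fun_prop
    have := ((hind.indepFun h).comp (hφ (p i)) (hφ (p i'))).integral_mul_eq_mul_integral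
      (by fun_prop) (by fun_prop)
    simp only [Function.comp_def, Pi.mul_def] at this
    rw [this, integral_one_sub_div_eq_zero (hγ i) (h01 i) (hp i) (hBer i), zero_mul]

end Bernoulli

lemma integral_smul_sum_smul_mul_self_apply {Ω : Type*} [MeasurableSpace Ω] {μ : Measure Ω}
    {ι m : Type*} [Fintype ι] [DecidableEq ι] [Fintype m] {a : ι → Ω → ℝ} {v : ι → ℝ}
    (hint : ∀ i i', Integrable (fun ω => a i ω * a i' ω) μ)
    (hcov : ∀ i i', ∫ ω, a i ω * a i' ω ∂μ = if i = i' then v i else 0)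
    (c : ℝ) (A : ι → Matrix m m ℝ) (j k : m) :
    ∫ ω, ((c • ∑ i, a i ω • A i) * (c • ∑ i, a i ω • A i)) j k ∂μ
      = ((c ^ 2) • ∑ i, v i • (A i * A i)) j k := by
  simp_rw [smul_mul_smul, Finset.sum_mul_sum, smul_mul_smul, Matrix.smul_apply, Matrix.sum_apply,
    Matrix.smul_apply, smul_eq_mul, Finset.mul_sum]
  rw [integral_finsetSum _ fun i _ => integrable_finsetSum _ fun i' _ =>
    ((hint i i').mul_const _).const_mul _]
  refine Finset.sum_congr rfl fun i _ => ?_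
  rw [integral_finsetSum _ fun i' _ => ((hint i i').mul_const _).const_mul _]
  simp_rw [integral_const_mul, integral_mul_const, hcov]
  simp [sq]

lemma lamMax_le_of_forall_dotProduct_mulVec_le {d : ℕ} {M : Matrix (Fin d) (Fin d) ℝ}
    (hM : M.IsHermitian) {c : ℝ} (hc : 0 ≤ c) (h : ∀ v, v ⬝ᵥ M *ᵥ v ≤ c * (v ⬝ᵥ v)) :
    lamMax M ≤ c := by
  rw [lamMax, dif_pos hM]
  refine Real.iSup_le (fun i => ?_) hc
  have hunit : ⇑(hM.eigenvectorBasis i) ⬝ᵥ ⇑(hM.eigenvectorBasis i) = 1 := by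
    have := real_inner_self_eq_norm_sq (hM.eigenvectorBasis i)
    rwa [hM.eigenvectorBasis.orthonormal.1 i, EuclideanSpace.inner_eq_star_dotProduct,
      one_pow] at this
  simpa [hM.eigenvalues_eq, hunit] using h (hM.eigenvectorBasis i)

lemma sq_dotProduct_le {m : Type*} [Fintype m] (u v : m → ℝ) :
    (u ⬝ᵥ v) ^ 2 ≤ (u ⬝ᵥ u) * (v ⬝ᵥ v) := by
  simpa [dotProduct, sq] using Finset.sum_mul_sq_le_sq_mul_sq Finset.univ u v

lemma dotProduct_vecMulVec_mul_self_mulVec {m : Type*} [Fintype m] (x v : m → ℝ) :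
    v ⬝ᵥ (vecMulVec x x * vecMulVec x x) *ᵥ v = (x ⬝ᵥ x) * (x ⬝ᵥ v) ^ 2 := by
  rw [vecMulVec_mul_vecMulVec, vecMulVec_mulVec]
  simp [dotProduct_smul, dotProduct_comm v x]
  ring

lemma isHermitian_vecMulVec_mul_self {m : Type*} [Fintype m] (x : m → ℝ) :
    (vecMulVec x x * vecMulVec x x).IsHermitian := by
  simp [IsHermitian]

lemma lamMax_sum_smul_vecMulVec_mul_self_le {ι : Type*} [Fintype ι] {d : ℕ}
    (x : ι → Fin d → ℝ) {c q : ι → ℝ} (hcq : ∀ i, c i ≤ q i) (hq : ∀ i, 0 ≤ q i) :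
    lamMax (∑ i, c i • (vecMulVec (x i) (x i) * vecMulVec (x i) (x i)))
      ≤ ∑ i, q i * (x i ⬝ᵥ x i) ^ 2 := by
  have hherm : (∑ i, c i • (vecMulVec (x i) (x i) * vecMulVec (x i) (x i))).IsHermitian := by
    rw [isHermitian_iff_isSelfAdjoint]
    exact isSelfAdjoint_sum _ fun i _ =>
      ((isHermitian_vecMulVec_mul_self (x i)).smul (IsSelfAdjoint.all (c i))).isSelfAdjoint
  refine lamMax_le_of_forall_dotProduct_mulVec_le hherm
    (Finset.sum_nonneg fun i _ => mul_nonneg (hq i) (sq_nonneg _)) fun v => ?_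
  simp_rw [sum_mulVec, dotProduct_sum, smul_mulVec, dotProduct_smul, smul_eq_mul,
    dotProduct_vecMulVec_mul_self_mulVec, Finset.sum_mul]
  refine Finset.sum_le_sum fun i _ => ?_
  have hs : 0 ≤ x i ⬝ᵥ x i := by simpa using dotProduct_self_star_nonneg (x i)
  calc c i * ((x i ⬝ᵥ x i) * (x i ⬝ᵥ v) ^ 2)
      ≤ q i * ((x i ⬝ᵥ x i) * ((x i ⬝ᵥ x i) * (v ⬝ᵥ v))) := by
        gcongr
        · exact hq i
        · exact hcq i
        · exact sq_dotProduct_le _ _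
    _ = q i * (x i ⬝ᵥ x i) ^ 2 * (v ⬝ᵥ v) := by ring

theorem stmt4_general {n d : ℕ}
    (x : Fin n → Fin d → ℝ)
    (w : Fin n → ℝ) (hw0 : ∀ i, 0 < w i)
    (r : ℝ) (hr : 0 < r)
    (p : Fin n → ℝ) (hp : ∀ i, p i = r * w i)
    (sS2 : ℝ) (hsS2 : sS2 = ((n : ℝ) ^ 2)⁻¹ * ∑ i, (w i)⁻¹ * (∑ k, x i k ^ 2) ^ 2)
    {Ω : Type} [MeasurableSpace Ω] (μ : Measure Ω) [IsProbabilityMeasure μ]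
    (γ : Fin n → Ω → ℝ) (hmeas : ∀ i, Measurable (γ i))
    (h01 : ∀ i ω, γ i ω = 0 ∨ γ i ω = 1)
    (hBer : ∀ i, μ {ω | γ i ω = 1} = ENNReal.ofReal (p i))
    (hind : iIndepFun γ μ)
    (Δ : Ω → Matrix (Fin d) (Fin d) ℝ)
    (hΔ : ∀ ω, Δ ω = (n : ℝ)⁻¹ • ∑ i, (1 - γ i ω / p i) • vecMulVec (x i) (x i)) :
    (∀ j k,
        (∫ ω, (Δ ω * Δ ω) j k ∂μ) =
          (((n : ℝ) ^ 2)⁻¹ •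
            ∑ i, ((p i)⁻¹ - 1) • (vecMulVec (x i) (x i) * vecMulVec (x i) (x i))) j k) ∧
      lamMax (Matrix.of fun j k => ∫ ω, (Δ ω * Δ ω) j k ∂μ) ≤ sS2 / r := by
  have hp0 : ∀ i, 0 < p i := fun i => hp i ▸ mul_pos hr (hw0 i)
  have hEΔsq : ∀ j k, ∫ ω, (Δ ω * Δ ω) j k ∂μ = (((n : ℝ) ^ 2)⁻¹ •
      ∑ i, ((p i)⁻¹ - 1) • (vecMulVec (x i) (x i) * vecMulVec (x i) (x i))) j k := fun j k => by
    simp_rw [hΔ, ← inv_pow]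
    exact integral_smul_sum_smul_mul_self_apply
      (integrable_one_sub_div_mul_one_sub_div hmeas h01 hp0)
      (integral_one_sub_div_mul_one_sub_div hmeas h01 hp0 hBer hind) _ _ j k
  refine ⟨hEΔsq, ?_⟩
  have hEΔsq_eq_sum : (Matrix.of fun j k => ∫ ω, (Δ ω * Δ ω) j k ∂μ) = ∑ i, (((n : ℝ) ^ 2)⁻¹ *
      ((p i)⁻¹ - 1)) • (vecMulVec (x i) (x i) * vecMulVec (x i) (x i)) := by
    ext j k
    rw [of_apply, hEΔsq, Finset.smul_sum]
    simp_rw [smul_smul]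
  calc _ ≤ ∑ i, ((n : ℝ) ^ 2)⁻¹ * (p i)⁻¹ * (x i ⬝ᵥ x i) ^ 2 := by
        rw [hEΔsq_eq_sum]
        exact lamMax_sum_smul_vecMulVec_mul_self_le x
          (fun i => mul_le_mul_of_nonneg_left (sub_le_self _ zero_le_one) (by positivity))
          fun i => by have := hp0 i; positivity
    _ = sS2 / r := by
        simp_rw [hsS2, hp, dotProduct, ← sq, Finset.mul_sum, Finset.sum_div, mul_inv]
        exact Finset.sum_congr rfl fun i _ => by ring

/-- `E[Δ²] = (1/n²)·Σ_i (1/p_i − 1)·(x_i x_iᵀ)²` (entrywise), and consequently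
`λ_max(E[Δ²]) ≤ σ_Σ²/r` where `σ_Σ² = (1/n²)Σ_i π_i⁻¹‖x_i‖⁴`. -/
theorem stmt4 {n d : ℕ} (hn : 1 ≤ n) (hd : 1 ≤ d)
    (x : Fin n → Fin d → ℝ)
    (w : Fin n → ℝ) (hw0 : ∀ i, 0 < w i) (hw1 : ∑ i, w i = 1)
    (r : ℝ) (hr : 0 < r)
    (p : Fin n → ℝ) (hp : ∀ i, p i = r * w i) (hp1 : ∀ i, p i ≤ 1)
    (sS2 : ℝ) (hsS2 : sS2 = ((n : ℝ) ^ 2)⁻¹ * ∑ i, (w i)⁻¹ * (∑ k, x i k ^ 2) ^ 2)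
    {Ω : Type} [MeasurableSpace Ω] (μ : Measure Ω) [IsProbabilityMeasure μ]
    (γ : Fin n → Ω → ℝ) (hmeas : ∀ i, Measurable (γ i))
    (h01 : ∀ i ω, γ i ω = 0 ∨ γ i ω = 1)
    (hBer : ∀ i, μ {ω | γ i ω = 1} = ENNReal.ofReal (p i))
    (hind : iIndepFun γ μ)
    (Δ : Ω → Matrix (Fin d) (Fin d) ℝ)
    (hΔ : ∀ ω, Δ ω = (n : ℝ)⁻¹ • ∑ i, (1 - γ i ω / p i) • vecMulVec (x i) (x i)) :
    (∀ j k,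
        (∫ ω, (Δ ω * Δ ω) j k ∂μ) =
          (((n : ℝ) ^ 2)⁻¹ •
            ∑ i, ((p i)⁻¹ - 1) • (vecMulVec (x i) (x i) * vecMulVec (x i) (x i))) j k) ∧
      lamMax (Matrix.of fun j k => ∫ ω, (Δ ω * Δ ω) j k ∂μ) ≤ sS2 / r :=
  stmt4_general x w hw0 r hr p hp sS2 hsS2 μ γ hmeas h01 hBer hind Δ hΔ
end

section
/- (Lemma 1 of the paper.) Let Δ = (1/n)·Σ_{i=1}^n (1 − γ_i/p_i)·x_i x_iᵀ, let R = max_i ‖x_i‖² and σ_Σ² = (1/n²)Σ_{i=1}^n π_i⁻¹‖x_i‖⁴. Then E[λ_max(Δ)] ≤ r^{−1/2}·σ_Σ·√(2 log d) + (R/(3n))·log d. -/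
/-!
Cauchy–Schwarz alone beats the Bernstein bound here. Every eigenvalue of a symmetric matrix is at
most its Frobenius norm, so `E λ_max(Δ) ≤ (E ‖Δ‖_F²)^{1/2}`. The entry
`Δ_kl = n⁻¹ Σ_i (1 - γ_i/p_i) x_ik x_il` is a sum of independent centred terms, and
`E (1 - γ_i/p_i)² = p_i⁻¹ - 1`, so `E ‖Δ‖_F² ≤ n⁻² Σ_i p_i⁻¹ ‖x_i‖⁴ = σ_Σ²/r`.
As `2 log d ≥ 2 log 2 > 1` for `d ≥ 2`, this is below the first term of the bound.
-/

open MeasureTheory ProbabilityTheory Matrix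

open Finset
open scoped ENNReal

lemma sq_le_sum_sq_of_mulVec_eq_smul {ι : Type*} [Fintype ι] {M : Matrix ι ι ℝ} {v : ι → ℝ}
    {c : ℝ} (hv : ∑ l, v l ^ 2 = 1) (h : M *ᵥ v = c • v) : c ^ 2 ≤ ∑ k, ∑ l, M k l ^ 2 := by
  have hrow : ∀ k, c * v k = ∑ l, M k l * v l := fun k => by
    simpa [mulVec, dotProduct] using (congrFun h k).symm
  calc c ^ 2 = ∑ k, (c * v k) ^ 2 := by simp_rw [mul_pow, ← mul_sum, hv, mul_one]
    _ = ∑ k, (∑ l, M k l * v l) ^ 2 := by simp_rw [hrow]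
    _ ≤ ∑ k, (∑ l, M k l ^ 2) * ∑ l, v l ^ 2 :=
      sum_le_sum fun k _ => sum_mul_sq_le_sq_mul_sq _ _ _
    _ = ∑ k, ∑ l, M k l ^ 2 := by simp [hv]

lemma Matrix.IsHermitian.lamMax_le_sqrt_sum_sq {d : ℕ} {M : Matrix (Fin d) (Fin d) ℝ}
    (hM : M.IsHermitian) : lamMax M ≤ √(∑ k, ∑ l, M k l ^ 2) := by
  rw [lamMax, dif_pos hM]
  refine Real.iSup_le (fun j => ?_) (Real.sqrt_nonneg _)
  have hv : ∑ l, hM.eigenvectorBasis j l ^ 2 = 1 := by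
    have := hM.eigenvectorBasis.orthonormal.1 j
    rw [EuclideanSpace.norm_eq] at this
    simpa using this
  exact (le_abs_self _).trans
    (Real.abs_le_sqrt (sq_le_sum_sq_of_mulVec_eq_smul hv (hM.mulVec_eigenvectorBasis j)))

lemma isHermitian_sum_smul_vecMulVec_self {ι κ : Type*} [Fintype ι] (c : ι → ℝ)
    (x : ι → κ → ℝ) : (∑ i, c i • vecMulVec (x i) (x i)).IsHermitian := by
  ext k l
  simp [Matrix.sum_apply, vecMulVec_apply, mul_comm]

lemma sum_sum_sq_mul_eq_sq_sum_sq {κ : Type*} [Fintype κ] (v : κ → ℝ) :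
    ∑ k, ∑ l, (v k * v l) ^ 2 = (∑ k, v k ^ 2) ^ 2 := by
  simp_rw [sq (∑ k, v k ^ 2), sum_mul_sum, mul_pow]

lemma one_le_two_mul_log {x : ℝ} (hx : 2 ≤ x) : 1 ≤ 2 * Real.log x := by
  have := Real.log_le_log two_pos hx
  linarith [Real.log_two_gt_d9]

section

variable {Ω : Type*} [MeasurableSpace Ω] {μ : Measure Ω}

structure IsBernoulli (g : Ω → ℝ) (p : ℝ) (μ : Measure Ω) : Prop where
  measurable : Measurable g
  zero_or_one : ∀ ω, g ω = 0 ∨ g ω = 1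
  measure_eq_one : μ {ω | g ω = 1} = ENNReal.ofReal p

namespace IsBernoulli

variable {g : Ω → ℝ} {p : ℝ}

lemma integral_eq (hB : IsBernoulli g p μ) (hp : 0 ≤ p) : ∫ ω, g ω ∂μ = p := by
  have hind : ∀ ω, g ω = {ω | g ω = 1}.indicator 1 ω := fun ω => by
    rcases hB.zero_or_one ω with h | h <;> simp [h]
  calc ∫ ω, g ω ∂μ = μ.real {ω | g ω = 1} :=
        (integral_congr_ae (ae_of_all _ hind)).trans
          (integral_indicator_one (hB.measurable (measurableSet_singleton 1)))
    _ = p := by rw [measureReal_def, hB.measure_eq_one, ENNReal.toReal_ofReal hp]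

lemma memLp [IsFiniteMeasure μ] (hB : IsBernoulli g p μ) (q : ℝ≥0∞) : MemLp g q μ :=
  memLp_of_bounded (a := 0) (b := 1)
    (ae_of_all _ fun ω => by rcases hB.zero_or_one ω with h | h <;> simp [h])
    hB.measurable.aestronglyMeasurable q

variable [IsProbabilityMeasure μ]

lemma integral_one_sub_div (hB : IsBernoulli g p μ) (hp : 0 < p) :
    ∫ ω, 1 - g ω / p ∂μ = 0 := by
  rw [integral_sub (integrable_const 1) ((hB.memLp 1).integrable le_rfl |>.div_const p),
    integral_div, hB.integral_eq hp.le, div_self hp.ne']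
  simp

lemma integral_one_sub_div_sq (hB : IsBernoulli g p μ) (hp : 0 < p) :
    ∫ ω, (1 - g ω / p) ^ 2 ∂μ = p⁻¹ - 1 := by
  have hpt : ∀ ω, (1 - g ω / p) ^ 2 = 1 + (p⁻¹ - 2) * (g ω / p) := fun ω => by
    rcases hB.zero_or_one ω with h | h
    · simp [h]
    · simp only [h]
      field_simp
      ring
  simp_rw [hpt]
  rw [integral_add (integrable_const 1)
      (((hB.memLp 1).integrable le_rfl |>.div_const p).const_mul _),
    integral_const_mul, integral_div, hB.integral_eq hp.le, div_self hp.ne']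
  simp
  ring

end IsBernoulli

variable [IsProbabilityMeasure μ]

lemma integral_le_sqrt_integral_sq {f : Ω → ℝ} (hf : MemLp f 2 μ) :
    ∫ ω, f ω ∂μ ≤ √(∫ ω, f ω ^ 2 ∂μ) := by
  have h := variance_nonneg f μ
  rw [variance_eq_sub hf] at h
  exact (le_abs_self _).trans (Real.abs_le_sqrt (by simpa using h))

lemma integral_lamMax_le_sqrt_sum_integral_sq {d : ℕ} {Δ : Ω → Matrix (Fin d) (Fin d) ℝ}
    (hΔ : ∀ ω, (Δ ω).IsHermitian) (hΔ2 : ∀ k l, MemLp (fun ω => Δ ω k l) 2 μ) :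
    ∫ ω, lamMax (Δ ω) ∂μ ≤ √(∑ k, ∑ l, ∫ ω, Δ ω k l ^ 2 ∂μ) := by
  set F : Ω → ℝ := fun ω => √(∑ k, ∑ l, Δ ω k l ^ 2)
  have hsq : ∀ ω, F ω ^ 2 = ∑ k, ∑ l, Δ ω k l ^ 2 := fun ω => Real.sq_sqrt (by positivity)
  have hint : ∀ k l, Integrable (fun ω => Δ ω k l ^ 2) μ := fun k l => (hΔ2 k l).integrable_sq
  have hF : MemLp F 2 μ := by
    refine (memLp_two_iff_integrable_sq ?_).2 ?_
    · exact (aemeasurable_fun_sum _ fun k _ => aemeasurable_fun_sum _ fun l _ =>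
        (hΔ2 k l).aestronglyMeasurable.aemeasurable.pow_const 2).sqrt.aestronglyMeasurable
    · simp_rw [hsq]
      exact integrable_finsetSum _ fun k _ => integrable_finsetSum _ fun l _ => hint k l
  have hFsq : ∫ ω, F ω ^ 2 ∂μ = ∑ k, ∑ l, ∫ ω, Δ ω k l ^ 2 ∂μ := by
    simp_rw [hsq]
    rw [integral_finsetSum _ fun k _ => integrable_finsetSum _ fun l _ => hint k l]
    exact sum_congr rfl fun k _ => integral_finsetSum _ fun l _ => hint k l
  have hmono : ∫ ω, lamMax (Δ ω) ∂μ ≤ ∫ ω, F ω ∂μ := by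
    -- Measurability of `lamMax ∘ Δ` is never needed: without integrability its integral is `0`.
    by_cases hL : Integrable (fun ω => lamMax (Δ ω)) μ
    · exact integral_mono hL (hF.integrable one_le_two) fun ω => (hΔ ω).lamMax_le_sqrt_sum_sq
    · rw [integral_undef hL]
      exact integral_nonneg fun ω => Real.sqrt_nonneg _
  exact hFsq ▸ hmono.trans (integral_le_sqrt_integral_sq hF)

lemma integral_sq_sum_mul_of_iIndepFun {ι : Type*} [Fintype ι] {Y : ι → Ω → ℝ}
    (hY : ∀ i, MemLp (Y i) 2 μ) (hY0 : ∀ i, ∫ ω, Y i ω ∂μ = 0) (hind : iIndepFun Y μ)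
    (a : ι → ℝ) :
    ∫ ω, (∑ i, a i * Y i ω) ^ 2 ∂μ = ∑ i, a i ^ 2 * ∫ ω, Y i ω ^ 2 ∂μ := by
  let Z : ι → Ω → ℝ := fun i ω => a i * Y i ω
  have hZ : ∀ i, MemLp (Z i) 2 μ := fun i => (hY i).const_mul (a i)
  have hZind : iIndepFun Z μ := hind.comp (fun i t => a i * t) fun i => measurable_const_mul _
  have hmean : ∫ ω, (∑ i, Z i) ω ∂μ = 0 := by
    simp only [Finset.sum_apply]
    rw [integral_finsetSum _ fun i _ => (hZ i).integrable one_le_two]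
    exact sum_eq_zero fun i _ => by simp [Z, integral_const_mul, hY0]
  have hvar := variance_of_integral_eq_zero (memLp_finsetSum' _ fun i _ => hZ i).aemeasurable hmean
  rw [IndepFun.variance_sum (fun i _ => hZ i) fun i _ j _ hij => hZind.indepFun hij] at hvar
  simp only [Finset.sum_apply, Z] at hvar
  rw [← hvar]
  refine sum_congr rfl fun i _ => ?_
  rw [variance_const_mul, variance_of_integral_eq_zero (hY i).aemeasurable (hY0 i)]

lemma integral_lamMax_sum_smul_vecMulVec_le {d : ℕ} {ι : Type*} [Fintype ι] {Y : ι → Ω → ℝ}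
    (hY : ∀ i, MemLp (Y i) 2 μ) (hY0 : ∀ i, ∫ ω, Y i ω ∂μ = 0) (hind : iIndepFun Y μ)
    (x : ι → Fin d → ℝ) :
    ∫ ω, lamMax (∑ i, Y i ω • vecMulVec (x i) (x i)) ∂μ ≤
      √(∑ i, (∑ k, x i k ^ 2) ^ 2 * ∫ ω, Y i ω ^ 2 ∂μ) := by
  have hentry : ∀ ω k l,
      (∑ i, Y i ω • vecMulVec (x i) (x i)) k l = ∑ i, x i k * x i l * Y i ω := by
    intro ω k l
    simp [Matrix.sum_apply, vecMulVec_apply, mul_comm]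
  refine (integral_lamMax_le_sqrt_sum_integral_sq
    (fun ω => isHermitian_sum_smul_vecMulVec_self _ x) fun k l => ?_).trans_eq ?_
  · simp_rw [hentry]
    exact memLp_finsetSum univ fun i _ => (hY i).const_mul (x i k * x i l)
  · simp_rw [hentry, integral_sq_sum_mul_of_iIndepFun hY hY0 hind,
      ← sum_sum_sq_mul_eq_sq_sum_sq, sum_mul]
    refine congrArg _ (Eq.symm ?_)
    rw [sum_comm]
    exact sum_congr rfl fun _ _ => sum_comm

lemma integral_lamMax_smul_sum_bernoulli_le {d : ℕ} {ι : Type*} [Fintype ι] {γ : ι → Ω → ℝ}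
    {p : ι → ℝ} (hB : ∀ i, IsBernoulli (γ i) (p i) μ) (hp : ∀ i, 0 < p i)
    (hind : iIndepFun γ μ) (c : ℝ) (x : ι → Fin d → ℝ) :
    ∫ ω, lamMax (c • ∑ i, (1 - γ i ω / p i) • vecMulVec (x i) (x i)) ∂μ ≤
      √(c ^ 2 * ∑ i, (∑ k, x i k ^ 2) ^ 2 * ((p i)⁻¹ - 1)) := by
  set Y : ι → Ω → ℝ := fun i ω => c * (1 - γ i ω / p i)
  have hY2 : ∀ i, MemLp (Y i) 2 μ := fun i =>
    ((memLp_const 1).sub (((hB i).memLp 2).mul_const (p i)⁻¹)).const_mul c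
  have hY0 : ∀ i, ∫ ω, Y i ω ∂μ = 0 := fun i => by
    simp only [Y, integral_const_mul, (hB i).integral_one_sub_div (hp i), mul_zero]
  have hYind : iIndepFun Y μ := hind.comp (fun i t => c * (1 - t / p i)) fun i => by fun_prop
  have hYsq : ∀ i, ∫ ω, Y i ω ^ 2 ∂μ = c ^ 2 * ((p i)⁻¹ - 1) := fun i => by
    simp only [Y, mul_pow, integral_const_mul, (hB i).integral_one_sub_div_sq (hp i)]
  simp only [smul_sum, smul_smul]
  refine (integral_lamMax_sum_smul_vecMulVec_le hY2 hY0 hYind x).trans_eq ?_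
  simp only [hYsq, mul_sum]
  exact congrArg _ (sum_congr rfl fun i _ => by ring)

end

theorem stmt5_general {n d : ℕ} (hd : 2 ≤ d)
    (x : Fin n → Fin d → ℝ)
    (w : Fin n → ℝ) (hw0 : ∀ i, 0 < w i)
    (r : ℝ) (hr : 0 < r)
    (p : Fin n → ℝ) (hp : ∀ i, p i = r * w i)
    (sS2 : ℝ) (hsS2 : sS2 = ((n : ℝ) ^ 2)⁻¹ * ∑ i, (w i)⁻¹ * (∑ k, x i k ^ 2) ^ 2)
    (R : ℝ) (hR : R = ⨆ j, ∑ k, x j k ^ 2)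
    {Ω : Type} [MeasurableSpace Ω] (μ : Measure Ω) [IsProbabilityMeasure μ]
    (γ : Fin n → Ω → ℝ) (hmeas : ∀ i, Measurable (γ i))
    (h01 : ∀ i ω, γ i ω = 0 ∨ γ i ω = 1)
    (hBer : ∀ i, μ {ω | γ i ω = 1} = ENNReal.ofReal (p i))
    (hind : iIndepFun γ μ)
    (Δ : Ω → Matrix (Fin d) (Fin d) ℝ)
    (hΔ : ∀ ω, Δ ω = (n : ℝ)⁻¹ • ∑ i, (1 - γ i ω / p i) • vecMulVec (x i) (x i)) :
    (∫ ω, lamMax (Δ ω) ∂μ) ≤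
      (Real.sqrt r)⁻¹ * Real.sqrt sS2 * Real.sqrt (2 * Real.log d) +
        (R / (3 * n)) * Real.log d := by
  have hp0 : ∀ i, 0 < p i := fun i => hp i ▸ mul_pos hr (hw0 i)
  have hB : ∀ i, IsBernoulli (γ i) (p i) μ := fun i => ⟨hmeas i, h01 i, hBer i⟩
  have hmoment : ((n : ℝ)⁻¹) ^ 2 * ∑ i, (∑ k, x i k ^ 2) ^ 2 * ((p i)⁻¹ - 1) ≤ r⁻¹ * sS2 :=
    calc ((n : ℝ)⁻¹) ^ 2 * ∑ i, (∑ k, x i k ^ 2) ^ 2 * ((p i)⁻¹ - 1)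
        ≤ ((n : ℝ)⁻¹) ^ 2 * ∑ i, (∑ k, x i k ^ 2) ^ 2 * (p i)⁻¹ := by
          gcongr with i
          exact sub_le_self _ zero_le_one
      _ = r⁻¹ * sS2 := by
          simp only [hsS2, hp, mul_inv, mul_sum]
          exact sum_congr rfl fun i _ => by ring
  have hR0 : 0 ≤ R := hR ▸ Real.iSup_nonneg fun j => by positivity
  calc ∫ ω, lamMax (Δ ω) ∂μ
      ≤ √(((n : ℝ)⁻¹) ^ 2 * ∑ i, (∑ k, x i k ^ 2) ^ 2 * ((p i)⁻¹ - 1)) := by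
        simp_rw [hΔ]
        exact integral_lamMax_smul_sum_bernoulli_le hB hp0 hind _ x
    _ ≤ √(r⁻¹ * sS2) := Real.sqrt_le_sqrt hmoment
    _ = (√r)⁻¹ * √sS2 := by rw [Real.sqrt_mul (inv_nonneg.2 hr.le), Real.sqrt_inv]
    _ ≤ (√r)⁻¹ * √sS2 * √(2 * Real.log d) :=
      le_mul_of_one_le_right (by positivity)
        (Real.one_le_sqrt.2 (one_le_two_mul_log (by exact_mod_cast hd)))
    _ ≤ _ := le_add_of_nonneg_right
      (mul_nonneg (div_nonneg hR0 (by positivity)) (Real.log_natCast_nonneg d))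

/-- Lemma 1 of the paper: for the matrix Bernoulli series
`Δ = (1/n)Σ_i (1 − γ_i/p_i) x_i x_iᵀ`, with `R = max_i ‖x_i‖²` and
`σ_Σ² = (1/n²)Σ_i π_i⁻¹‖x_i‖⁴`, one has
`E[λ_max(Δ)] ≤ r^{−1/2}·σ_Σ·√(2 log d) + (R/(3n))·log d`. -/
theorem stmt5 {n d : ℕ} (hn : 1 ≤ n) (hd : 2 ≤ d)
    (x : Fin n → Fin d → ℝ)
    (w : Fin n → ℝ) (hw0 : ∀ i, 0 < w i) (hw1 : ∑ i, w i = 1)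
    (r : ℝ) (hr : 0 < r)
    (p : Fin n → ℝ) (hp : ∀ i, p i = r * w i) (hp1 : ∀ i, p i ≤ 1)
    (sS2 : ℝ) (hsS2 : sS2 = ((n : ℝ) ^ 2)⁻¹ * ∑ i, (w i)⁻¹ * (∑ k, x i k ^ 2) ^ 2)
    (R : ℝ) (hR : R = ⨆ j, ∑ k, x j k ^ 2)
    {Ω : Type} [MeasurableSpace Ω] (μ : Measure Ω) [IsProbabilityMeasure μ]
    (γ : Fin n → Ω → ℝ) (hmeas : ∀ i, Measurable (γ i))
    (h01 : ∀ i ω, γ i ω = 0 ∨ γ i ω = 1)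
    (hBer : ∀ i, μ {ω | γ i ω = 1} = ENNReal.ofReal (p i))
    (hind : iIndepFun γ μ)
    (Δ : Ω → Matrix (Fin d) (Fin d) ℝ)
    (hΔ : ∀ ω, Δ ω = (n : ℝ)⁻¹ • ∑ i, (1 - γ i ω / p i) • vecMulVec (x i) (x i)) :
    (∫ ω, lamMax (Δ ω) ∂μ) ≤
      (Real.sqrt r)⁻¹ * Real.sqrt sS2 * Real.sqrt (2 * Real.log d) +
        (R / (3 * n)) * Real.log d :=
  stmt5_general hd x w hw0 r hr p hp sS2 hsS2 R hR μ γ hmeas h01 hBer hind Δ hΔ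
end

section
/- Let β̂_n = Σ_n⁻¹ b_n be the full-data least-squares solution and e_i = y_i − x_iᵀβ̂_n the residuals. Then E[ ‖b_s − Σ_s β̂_n‖² ] = (1/n²)·Σ_{i=1}^n (1/p_i − 1)·‖x_i‖²·e_i² ≤ σ_b²/r, where σ_b² = (1/n²)Σ_{i=1}^n π_i⁻¹‖x_i‖² e_i², Σ_s = (1/n)Σ_i (γ_i/p_i)x_i x_iᵀ and b_s = (1/n)Σ_i (γ_i/p_i)y_i x_i. -/
/-!
Because `β̂` solves the normal equations `Σ_n β̂ = b_n`, the residuals satisfy `∑ e_i x_i = 0`,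
so `b_s − Σ_s β̂ = (1/n) ∑ (γ_i/p_i − 1) e_i x_i`. The weights `γ_i/p_i − 1` are independent,
centred, with second moment `1/p_i − 1`; hence the cross terms vanish in expectation and the
second moment of each coordinate is the sum of the variances. The bound is
`1/p_i − 1 ≤ 1/p_i = 1/(r π_i)`.
-/

open MeasureTheory ProbabilityTheory Matrix

section LeastSquares

variable {ι m R : Type*} [Fintype ι] [Fintype m] [CommRing R]

theorem sum_smul_smul_sub_sum_smul_vecMulVec_mulVec (v y : ι → R) (x : ι → m → R) (β : m → R) :
    ∑ i, v i • y i • x i - (∑ i, v i • vecMulVec (x i) (x i)) *ᵥ β =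
      ∑ i, (v i * (y i - x i ⬝ᵥ β)) • x i := by
  simp only [sum_mulVec, smul_mulVec, vecMulVec_mulVec, op_smul_eq_smul, ← Finset.sum_sub_distrib,
    smul_smul, ← sub_smul, mul_sub]

theorem sum_smul_sub_sum_vecMulVec_mulVec (y : ι → R) (x : ι → m → R) (β : m → R) :
    ∑ i, y i • x i - (∑ i, vecMulVec (x i) (x i)) *ᵥ β = ∑ i, (y i - x i ⬝ᵥ β) • x i := by
  simpa using sum_smul_smul_sub_sum_smul_vecMulVec_mulVec 1 y x β

end LeastSquares

section Moments

variable {Ω : Type*} [MeasurableSpace Ω] {μ : Measure Ω}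

theorem integral_sq_sum_of_pairwise_indepFun [IsFiniteMeasure μ] {ι : Type*} [Fintype ι]
    {X : ι → Ω → ℝ} (hX : ∀ i, MemLp (X i) 2 μ) (hmean : ∀ i, μ[X i] = 0)
    (hind : Pairwise fun i j => X i ⟂ᵢ[μ] X j) :
    ∫ ω, (∑ i, X i ω) ^ 2 ∂μ = ∑ i, ∫ ω, X i ω ^ 2 ∂μ := by
  have hsum : μ[∑ i, X i] = 0 := by
    simp only [Finset.sum_apply]
    rw [integral_finsetSum _ fun i _ => (hX i).integrable one_le_two]
    simp [hmean]
  calc ∫ ω, (∑ i, X i ω) ^ 2 ∂μ = Var[∑ i, X i; μ] := by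
        rw [variance_of_integral_eq_zero (memLp_finsetSum' _ fun i _ => hX i).aemeasurable hsum]
        simp
    _ = ∑ i, Var[X i; μ] := IndepFun.variance_sum (fun i _ => hX i) fun i _ j _ hij => hind hij
    _ = ∑ i, ∫ ω, X i ω ^ 2 ∂μ := by
        simp only [variance_of_integral_eq_zero (hX _).aemeasurable (hmean _)]

end Moments

section Bernoulli

variable {Ω : Type*} [MeasurableSpace Ω] {μ : Measure Ω} {g : Ω → ℝ} {q : ℝ}

theorem integral_eq_of_eq_zero_or_eq_one (hg : Measurable g) (h01 : ∀ ω, g ω = 0 ∨ g ω = 1)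
    (hq : 0 ≤ q) (hμ : μ {ω | g ω = 1} = ENNReal.ofReal q) : ∫ ω, g ω ∂μ = q := by
  have hindicator : g = Set.indicator {ω | g ω = 1} 1 := by
    funext ω
    rcases h01 ω with h | h <;> simp [h]
  rw [hindicator, integral_indicator_one, measureReal_def, hμ, ENNReal.toReal_ofReal hq]
  exact hg (measurableSet_singleton 1)

theorem integrable_of_eq_zero_or_eq_one [IsFiniteMeasure μ] (hg : Measurable g)
    (h01 : ∀ ω, g ω = 0 ∨ g ω = 1) : Integrable g μ :=
  .of_bound hg.aestronglyMeasurable 1 (ae_of_all _ fun ω => by rcases h01 ω with h | h <;> simp [h])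

theorem memLp_div_sub_one_of_eq_zero_or_eq_one [IsFiniteMeasure μ] (hg : Measurable g)
    (h01 : ∀ ω, g ω = 0 ∨ g ω = 1) (q : ℝ) (p : ENNReal) :
    MemLp (fun ω => g ω / q - 1) p μ :=
  memLp_of_bounded (a := min (q⁻¹ - 1) (-1)) (b := max (q⁻¹ - 1) (-1))
    (ae_of_all _ fun ω => by rcases h01 ω with h | h <;> simp [h]) (by fun_prop) p

variable [IsProbabilityMeasure μ]

theorem integral_div_sub_one_of_eq_zero_or_eq_one (hg : Measurable g)
    (h01 : ∀ ω, g ω = 0 ∨ g ω = 1) (hq : 0 < q) (hμ : μ {ω | g ω = 1} = ENNReal.ofReal q) :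
    ∫ ω, (g ω / q - 1) ∂μ = 0 := by
  rw [integral_sub ((integrable_of_eq_zero_or_eq_one hg h01).div_const q) (integrable_const 1),
    integral_div, integral_eq_of_eq_zero_or_eq_one hg h01 hq.le hμ, div_self hq.ne']
  simp

theorem integral_sq_div_sub_one_of_eq_zero_or_eq_one (hg : Measurable g)
    (h01 : ∀ ω, g ω = 0 ∨ g ω = 1) (hq : 0 < q) (hμ : μ {ω | g ω = 1} = ENNReal.ofReal q) :
    ∫ ω, (g ω / q - 1) ^ 2 ∂μ = q⁻¹ - 1 := by
  have hsq : ∀ ω, (g ω / q - 1) ^ 2 = (q⁻¹ ^ 2 - 2 * q⁻¹) * g ω + 1 := fun ω => by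
    rcases h01 ω with h | h <;> simp only [h] <;> ring
  simp only [hsq]
  rw [integral_add ((integrable_of_eq_zero_or_eq_one hg h01).const_mul _) (integrable_const 1),
    integral_const_mul, integral_eq_of_eq_zero_or_eq_one hg h01 hq.le hμ]
  field_simp
  simp
  ring

end Bernoulli

section InverseProbabilityWeighting

variable {Ω ι : Type*} [MeasurableSpace Ω] {μ : Measure Ω} [IsProbabilityMeasure μ] [Fintype ι]
  {γ : ι → Ω → ℝ} {p : ι → ℝ}

theorem integral_sq_sum_inverse_probability_weighted (hγ : ∀ i, Measurable (γ i))
    (h01 : ∀ i ω, γ i ω = 0 ∨ γ i ω = 1) (hp : ∀ i, 0 < p i)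
    (hμ : ∀ i, μ {ω | γ i ω = 1} = ENNReal.ofReal (p i)) (hind : iIndepFun γ μ) (c : ι → ℝ) :
    ∫ ω, (∑ i, (γ i ω / p i - 1) * c i) ^ 2 ∂μ = ∑ i, ((p i)⁻¹ - 1) * c i ^ 2 := by
  rw [integral_sq_sum_of_pairwise_indepFun (X := fun i ω => (γ i ω / p i - 1) * c i)
    fun i => (memLp_div_sub_one_of_eq_zero_or_eq_one (hγ i) (h01 i) (p i) 2).mul_const (c i)]
  · simp only [mul_pow, integral_mul_const,
      integral_sq_div_sub_one_of_eq_zero_or_eq_one (hγ _) (h01 _) (hp _) (hμ _)]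
  · intro i
    rw [integral_mul_const,
      integral_div_sub_one_of_eq_zero_or_eq_one (hγ i) (h01 i) (hp i) (hμ i), zero_mul]
  · intro i j hij
    exact (hind.indepFun hij).comp (φ := fun t => (t / p i - 1) * c i)
      (ψ := fun t => (t / p j - 1) * c j) (by fun_prop) (by fun_prop)

theorem integral_sum_sq_sum_inverse_probability_weighted {m : Type*} [Fintype m]
    (hγ : ∀ i, Measurable (γ i))
    (h01 : ∀ i ω, γ i ω = 0 ∨ γ i ω = 1) (hp : ∀ i, 0 < p i)
    (hμ : ∀ i, μ {ω | γ i ω = 1} = ENNReal.ofReal (p i)) (hind : iIndepFun γ μ) (c : ι → m → ℝ) :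
    ∫ ω, ∑ j, (∑ i, (γ i ω / p i - 1) * c i j) ^ 2 ∂μ = ∑ i, ((p i)⁻¹ - 1) * ∑ j, c i j ^ 2 := by
  have hmemLp : ∀ j, MemLp (fun ω => ∑ i, (γ i ω / p i - 1) * c i j) 2 μ := fun j =>
    memLp_finsetSum _ fun i _ =>
      (memLp_div_sub_one_of_eq_zero_or_eq_one (hγ i) (h01 i) (p i) 2).mul_const _
  rw [integral_finsetSum _ fun j _ => (hmemLp j).integrable_sq]
  simp only [integral_sq_sum_inverse_probability_weighted hγ h01 hp hμ hind, Finset.mul_sum]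
  exact Finset.sum_comm

end InverseProbabilityWeighting

theorem stmt8_general {n d : ℕ}
    (x : Fin n → Fin d → ℝ) (y : Fin n → ℝ)
    (Sn : Matrix (Fin d) (Fin d) ℝ)
    (hSn : Sn = (n : ℝ)⁻¹ • ∑ i, vecMulVec (x i) (x i))
    (hpd : Sn.PosDef)
    (bn : Fin d → ℝ) (hbn : bn = (n : ℝ)⁻¹ • ∑ i, y i • x i)
    (βhat : Fin d → ℝ) (hβ : βhat = Sn⁻¹ *ᵥ bn)
    (e : Fin n → ℝ) (he : ∀ i, e i = y i - ∑ k, x i k * βhat k)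
    (w : Fin n → ℝ) (hw0 : ∀ i, 0 < w i)
    (r : ℝ) (hr : 0 < r)
    (p : Fin n → ℝ) (hp : ∀ i, p i = r * w i)
    (sb2 : ℝ) (hsb2 : sb2 = ((n : ℝ) ^ 2)⁻¹ * ∑ i, (w i)⁻¹ * (∑ k, x i k ^ 2) * e i ^ 2)
    {Ω : Type} [MeasurableSpace Ω] (μ : Measure Ω) [IsProbabilityMeasure μ]
    (γ : Fin n → Ω → ℝ) (hmeas : ∀ i, Measurable (γ i))
    (h01 : ∀ i ω, γ i ω = 0 ∨ γ i ω = 1)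
    (hBer : ∀ i, μ {ω | γ i ω = 1} = ENNReal.ofReal (p i))
    (hind : iIndepFun γ μ)
    (Ss : Ω → Matrix (Fin d) (Fin d) ℝ)
    (hSs : ∀ ω, Ss ω = (n : ℝ)⁻¹ • ∑ i, (γ i ω / p i) • vecMulVec (x i) (x i))
    (bs : Ω → Fin d → ℝ)
    (hbs : ∀ ω, bs ω = (n : ℝ)⁻¹ • ∑ i, (γ i ω / p i) • y i • x i) :
    (∫ ω, ∑ j, (bs ω j - (Ss ω *ᵥ βhat) j) ^ 2 ∂μ) =
        ((n : ℝ) ^ 2)⁻¹ * ∑ i, ((p i)⁻¹ - 1) * (∑ k, x i k ^ 2) * e i ^ 2 ∧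
      ((n : ℝ) ^ 2)⁻¹ * ∑ i, ((p i)⁻¹ - 1) * (∑ k, x i k ^ 2) * e i ^ 2 ≤ sb2 / r := by
  have hp0 : ∀ i, 0 < p i := fun i => hp i ▸ mul_pos hr (hw0 i)
  have hnormal : bn - Sn *ᵥ βhat = 0 := by
    rw [hβ, mulVec_mulVec, mul_nonsing_inv _ ((isUnit_iff_isUnit_det Sn).mp hpd.isUnit),
      one_mulVec, sub_self]
  have hres : ∀ ω, bs ω - Ss ω *ᵥ βhat =
      ∑ i, ((γ i ω / p i - 1) * ((n : ℝ)⁻¹ * e i)) • x i := by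
    intro ω
    rw [← sub_zero (bs ω - _), ← hnormal, hbs, hSs, hbn, hSn, smul_mulVec,
      smul_mulVec, ← smul_sub, ← smul_sub, sum_smul_smul_sub_sum_smul_vecMulVec_mulVec,
      sum_smul_sub_sum_vecMulVec_mulVec, ← smul_sub, ← Finset.sum_sub_distrib, Finset.smul_sum]
    refine Finset.sum_congr rfl fun i _ => ?_
    have he' : e i = y i - x i ⬝ᵥ βhat := he i
    rw [← he', ← sub_smul, smul_smul]
    congr 1
    ring
  have hcoord : ∀ ω j, bs ω j - (Ss ω *ᵥ βhat) j =
      ∑ i, (γ i ω / p i - 1) * ((n : ℝ)⁻¹ * e i * x i j) := fun ω j => by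
    simp [← Pi.sub_apply, hres, Finset.sum_apply, mul_assoc]
  simp only [hcoord, integral_sum_sq_sum_inverse_probability_weighted hmeas h01 hp0 hBer hind]
  refine ⟨?_, ?_⟩
  · simp only [Finset.mul_sum, Finset.sum_mul]
    exact Finset.sum_congr rfl fun i _ => Finset.sum_congr rfl fun j _ => by ring
  · calc ((n : ℝ) ^ 2)⁻¹ * ∑ i, ((p i)⁻¹ - 1) * (∑ k, x i k ^ 2) * e i ^ 2
        ≤ ((n : ℝ) ^ 2)⁻¹ * ∑ i, (p i)⁻¹ * (∑ k, x i k ^ 2) * e i ^ 2 := by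
          gcongr with i
          exact sub_le_self _ zero_le_one
      _ = sb2 / r := by
          simp only [hsb2, hp, mul_inv, mul_div_assoc, Finset.sum_div]
          exact congrArg _ (Finset.sum_congr rfl fun i _ => by ring)

/-- `E[‖b_s − Σ_s β̂_n‖²] = (1/n²)Σ_i (1/p_i − 1)‖x_i‖² e_i² ≤ σ_b²/r`. -/
theorem stmt8 {n d : ℕ} (hn : 1 ≤ n) (hd : 1 ≤ d)
    (x : Fin n → Fin d → ℝ) (y : Fin n → ℝ)
    (Sn : Matrix (Fin d) (Fin d) ℝ)
    (hSn : Sn = (n : ℝ)⁻¹ • ∑ i, vecMulVec (x i) (x i))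
    (hpd : Sn.PosDef)
    (bn : Fin d → ℝ) (hbn : bn = (n : ℝ)⁻¹ • ∑ i, y i • x i)
    (βhat : Fin d → ℝ) (hβ : βhat = Sn⁻¹ *ᵥ bn)
    (e : Fin n → ℝ) (he : ∀ i, e i = y i - ∑ k, x i k * βhat k)
    (w : Fin n → ℝ) (hw0 : ∀ i, 0 < w i) (hw1 : ∑ i, w i = 1)
    (r : ℝ) (hr : 0 < r)
    (p : Fin n → ℝ) (hp : ∀ i, p i = r * w i) (hp1 : ∀ i, p i ≤ 1)
    (sb2 : ℝ) (hsb2 : sb2 = ((n : ℝ) ^ 2)⁻¹ * ∑ i, (w i)⁻¹ * (∑ k, x i k ^ 2) * e i ^ 2)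
    {Ω : Type} [MeasurableSpace Ω] (μ : Measure Ω) [IsProbabilityMeasure μ]
    (γ : Fin n → Ω → ℝ) (hmeas : ∀ i, Measurable (γ i))
    (h01 : ∀ i ω, γ i ω = 0 ∨ γ i ω = 1)
    (hBer : ∀ i, μ {ω | γ i ω = 1} = ENNReal.ofReal (p i))
    (hind : iIndepFun γ μ)
    (Ss : Ω → Matrix (Fin d) (Fin d) ℝ)
    (hSs : ∀ ω, Ss ω = (n : ℝ)⁻¹ • ∑ i, (γ i ω / p i) • vecMulVec (x i) (x i))
    (bs : Ω → Fin d → ℝ)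
    (hbs : ∀ ω, bs ω = (n : ℝ)⁻¹ • ∑ i, (γ i ω / p i) • y i • x i) :
    (∫ ω, ∑ j, (bs ω j - (Ss ω *ᵥ βhat) j) ^ 2 ∂μ) =
        ((n : ℝ) ^ 2)⁻¹ * ∑ i, ((p i)⁻¹ - 1) * (∑ k, x i k ^ 2) * e i ^ 2 ∧
      ((n : ℝ) ^ 2)⁻¹ * ∑ i, ((p i)⁻¹ - 1) * (∑ k, x i k ^ 2) * e i ^ 2 ≤ sb2 / r :=
  stmt8_general x y Sn hSn hpd bn hbn βhat hβ e he w hw0 r hr p hp sb2 hsb2 μ γ hmeas h01 hBer hind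
    Ss hSs bs hbs
end

section
/- (Equation (A.9) in the proof of Theorem 1.) Assume δ ∈ (0,1) with δ > 2R·log d/(3n·λ_min(Σ_n)) and r > 2σ_Σ²·log d / ( δ²·( λ_min(Σ_n)/2 − R·log d/(3nδ) )² ). Then with probability at least 1 − 2δ, the matrix Σ_s is invertible and the subsample estimator β̃ = Σ_s⁻¹ b_s satisfies ‖β̃ − β̂_n‖ ≤ C₁·r^{−1/2} + C₂·r^{−1}, where C₁ = 2·λ_min(Σ_n)⁻¹·δ⁻¹·σ_b and C₂ = 2·√(2 log d)·λ_min(Σ_n)⁻²·δ⁻²·σ_Σ·σ_b. -/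
open MeasureTheory ProbabilityTheory Matrix

/-!
Write `Zᵢ = γᵢ/pᵢ - 1`: these are independent and centred, with `E Zᵢ² ≤ 1/pᵢ`. By the normal
equations `∑ eᵢ xᵢ = 0`, both `b_s - Σ_s β̂_n = n⁻¹ ∑ Zᵢ eᵢ xᵢ` and `Σ_s - Σ_n = n⁻¹ ∑ Zᵢ xᵢ xᵢᵀ`
are centred sums, whose mean squared (Euclidean, resp. Frobenius) norms are at most `σ_b²/r` and
`σ_Σ²/r`. By Markov's inequality, they exceed `σ_b²/(δ² r)`, resp. `(λ_min/2)²`, with probability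
at most `δ` each (the latter by the assumption on `r`). Off these two events
`Σ_s ⪰ (λ_min/2) I`, so `Σ_s` is invertible and
`‖β̃ - β̂_n‖ ≤ (2/λ_min) ‖b_s - Σ_s β̂_n‖ ≤ C₁ r^{-1/2}`.
-/

section Spectrum

variable {d : ℕ} {S : Matrix (Fin d) (Fin d) ℝ}

lemma lamMin_le_eigenvalues (hS : S.IsHermitian) (i : Fin d) : lamMin S ≤ hS.eigenvalues i := by
  rw [lamMin, dif_pos hS]
  exact ciInf_le (Finite.bddBelow_range _) i

lemma Matrix.PosDef.lamMin_pos [NeZero d] (hS : S.PosDef) : 0 < lamMin S := by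
  obtain ⟨i, hi⟩ := exists_eq_ciInf_of_finite (f := hS.1.eigenvalues)
  rw [lamMin, dif_pos hS.1, ← hi]
  exact hS.eigenvalues_pos i

lemma posSemidef_sub_lamMin_smul_one (hS : S.IsHermitian) : (S - lamMin S • 1).PosSemidef := by
  set U : Matrix (Fin d) (Fin d) ℝ := (hS.eigenvectorUnitary : Matrix (Fin d) (Fin d) ℝ)
  have hU : U * star U = 1 := Matrix.mem_unitaryGroup_iff.mp hS.eigenvectorUnitary.2
  have hspec : S = U * diagonal hS.eigenvalues * star U := hS.spectral_theorem
  have : S - lamMin S • 1 = U * diagonal (fun i ↦ hS.eigenvalues i - lamMin S) * Uᴴ := by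
    rw [← diagonal_sub, ← smul_one_eq_diagonal, Matrix.mul_sub, Matrix.sub_mul, Matrix.mul_smul,
      mul_one, Matrix.smul_mul, ← star_eq_conjTranspose, hU, ← hspec]
  rw [this]
  exact (posSemidef_diagonal_iff.mpr fun i ↦ sub_nonneg.mpr (lamMin_le_eigenvalues hS i))
    |>.mul_mul_conjTranspose_same U

lemma lamMin_mul_dotProduct_self_le (hS : S.IsHermitian) (u : Fin d → ℝ) :
    lamMin S * (u ⬝ᵥ u) ≤ u ⬝ᵥ (S *ᵥ u) := by
  have := (posSemidef_sub_lamMin_smul_one hS).dotProduct_mulVec_nonneg u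
  simp only [star_trivial, sub_mulVec, smul_mulVec, one_mulVec, dotProduct_sub,
    dotProduct_smul, smul_eq_mul] at this
  linarith

end Spectrum

section QuadraticForm

variable {ι : Type*} [Fintype ι]

lemma sq_dotProduct_mulVec_le (M : Matrix ι ι ℝ) (u : ι → ℝ) :
    (u ⬝ᵥ (M *ᵥ u)) ^ 2 ≤ (∑ k, ∑ l, M k l ^ 2) * (u ⬝ᵥ u) ^ 2 := by
  have hform : u ⬝ᵥ (M *ᵥ u) = ∑ kl : ι × ι, M kl.1 kl.2 * (u kl.1 * u kl.2) := by
    simp only [dotProduct, mulVec, Finset.mul_sum, Fintype.sum_prod_type]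
    exact Finset.sum_congr rfl fun k _ ↦ Finset.sum_congr rfl fun l _ ↦ by ring
  have hnorm : (u ⬝ᵥ u) ^ 2 = ∑ kl : ι × ι, (u kl.1 * u kl.2) ^ 2 := by
    simp only [dotProduct, sq, Finset.sum_mul_sum, Fintype.sum_prod_type]
    exact Finset.sum_congr rfl fun k _ ↦ Finset.sum_congr rfl fun l _ ↦ by ring
  rw [hform, hnorm, ← Fintype.sum_prod_type' fun k l ↦ M k l ^ 2]
  exact Finset.sum_mul_sq_le_sq_mul_sq _ _ _

lemma le_dotProduct_mulVec_of_sum_sq_sub_le {S T : Matrix ι ι ℝ} {c : ℝ} (hc : 0 ≤ c)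
    (hS : ∀ u, c * (u ⬝ᵥ u) ≤ u ⬝ᵥ (S *ᵥ u)) (hTS : ∑ k, ∑ l, (T - S) k l ^ 2 ≤ (c / 2) ^ 2)
    (u : ι → ℝ) : c / 2 * (u ⬝ᵥ u) ≤ u ⬝ᵥ (T *ᵥ u) := by
  have hsq : (u ⬝ᵥ ((T - S) *ᵥ u)) ^ 2 ≤ (c / 2 * (u ⬝ᵥ u)) ^ 2 :=
    (sq_dotProduct_mulVec_le _ u).trans (by rw [mul_pow]; gcongr)
  have hbound := abs_le_of_sq_le_sq' hsq
    (mul_nonneg (by positivity) (by simpa using dotProduct_star_self_nonneg u))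
  rw [sub_mulVec, dotProduct_sub] at hbound
  linarith [hS u]

lemma posDef_of_coercive {T : Matrix ι ι ℝ} (hT : T.IsHermitian) {a : ℝ} (ha : 0 < a)
    (hcoer : ∀ u, a * (u ⬝ᵥ u) ≤ u ⬝ᵥ (T *ᵥ u)) : T.PosDef := by
  refine .of_dotProduct_mulVec_pos hT fun u hu ↦ ?_
  have hu' : 0 < u ⬝ᵥ u := by simpa using dotProduct_star_self_pos_iff.mpr hu
  simpa using (mul_pos ha hu').trans_le (hcoer u)

end QuadraticForm

section EuclNorm

variable {d : ℕ}

lemma dotProduct_le_euclNorm_mul_euclNorm (u v : Fin d → ℝ) :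
    u ⬝ᵥ v ≤ euclNorm u * euclNorm v :=
  Real.sum_mul_le_sqrt_mul_sqrt _ _ _

lemma mul_euclNorm_le_euclNorm_mulVec {T : Matrix (Fin d) (Fin d) ℝ} {a : ℝ}
    (hcoer : ∀ u, a * (u ⬝ᵥ u) ≤ u ⬝ᵥ (T *ᵥ u)) (u : Fin d → ℝ) :
    a * euclNorm u ≤ euclNorm (T *ᵥ u) := by
  have h : euclNorm u * (a * euclNorm u) ≤ euclNorm u * euclNorm (T *ᵥ u) := by
    calc euclNorm u * (a * euclNorm u) = a * (u ⬝ᵥ u) := by rw [← euclNorm_sq]; ring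
      _ ≤ u ⬝ᵥ (T *ᵥ u) := hcoer u
      _ ≤ euclNorm u * euclNorm (T *ᵥ u) := dotProduct_le_euclNorm_mul_euclNorm _ _
  rcases (euclNorm_nonneg u).eq_or_lt with hu | hu
  · rw [← hu, mul_zero]
    exact euclNorm_nonneg _
  · exact le_of_mul_le_mul_left h hu

lemma isUnit_det_and_mul_euclNorm_inv_mulVec_sub_le_of_coercive {T : Matrix (Fin d) (Fin d) ℝ}
    (hT : T.IsHermitian) {a : ℝ} (ha : 0 < a) (hcoer : ∀ u, a * (u ⬝ᵥ u) ≤ u ⬝ᵥ (T *ᵥ u))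
    (b β : Fin d → ℝ) :
    IsUnit T.det ∧ a * euclNorm (T⁻¹ *ᵥ b - β) ≤ euclNorm (b - T *ᵥ β) := by
  have hdet : IsUnit T.det := (posDef_of_coercive hT ha hcoer).det_pos.ne'.isUnit
  refine ⟨hdet, ?_⟩
  have := mul_euclNorm_le_euclNorm_mulVec hcoer (T⁻¹ *ᵥ b - β)
  rwa [mulVec_sub, mulVec_mulVec, mul_nonsing_inv _ hdet, one_mulVec] at this

lemma isUnit_det_and_euclNorm_inv_mulVec_sub_le {S T : Matrix (Fin d) (Fin d) ℝ}
    (hS : S.IsHermitian) (hT : T.IsHermitian) (hc : 0 < lamMin S)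
    (hTS : ∑ k, ∑ l, (T - S) k l ^ 2 ≤ (lamMin S / 2) ^ 2) {b β : Fin d → ℝ} {σ δ r : ℝ}
    (hδ : 0 < δ) (hr : 0 ≤ r) (hb : ∑ k, (b - T *ᵥ β) k ^ 2 ≤ σ / (δ ^ 2 * r)) :
    IsUnit T.det ∧ euclNorm (T⁻¹ *ᵥ b - β) ≤ 2 * (lamMin S)⁻¹ * δ⁻¹ * √σ * (√r)⁻¹ := by
  have hcoer := le_dotProduct_mulVec_of_sum_sq_sub_le hc.le (lamMin_mul_dotProduct_self_le hS) hTS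
  obtain ⟨hdet, hbound⟩ :=
    isUnit_det_and_mul_euclNorm_inv_mulVec_sub_le_of_coercive hT (half_pos hc) hcoer b β
  have hres : euclNorm (b - T *ᵥ β) ≤ √σ / (δ * √r) := by
    calc euclNorm (b - T *ᵥ β) ≤ √(σ / (δ ^ 2 * r)) := Real.sqrt_le_sqrt hb
      _ = √σ / (δ * √r) := by
        rw [Real.sqrt_div' _ (by positivity), Real.sqrt_mul (by positivity), Real.sqrt_sq hδ.le]
  refine ⟨hdet, ?_⟩
  calc euclNorm (T⁻¹ *ᵥ b - β) ≤ (lamMin S / 2)⁻¹ * (√σ / (δ * √r)) :=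
        (le_inv_mul_iff₀ (half_pos hc)).mpr (hbound.trans hres)
    _ = 2 * (lamMin S)⁻¹ * δ⁻¹ * √σ * (√r)⁻¹ := by ring

end EuclNorm

section Probability

variable {Ω : Type*} [MeasurableSpace Ω] {μ : Measure Ω}

lemma measure_lt_le_ofReal_of_integral_le [IsFiniteMeasure μ] {f : Ω → ℝ} (hf : 0 ≤ f)
    (hfi : Integrable f μ) {t ε : ℝ} (ht : 0 ≤ t) (h : ∫ ω, f ω ∂μ ≤ ε * t) :
    μ {ω | t < f ω} ≤ ENNReal.ofReal ε := by
  rcases ht.eq_or_lt with rfl | ht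
  · have : μ (Function.support f) = 0 := by
      by_contra hne
      have := (integral_pos_iff_support_of_nonneg hf hfi).mpr (pos_iff_ne_zero.mpr hne)
      linarith
    exact (measure_mono_null (fun ω (hω : 0 < f ω) ↦ hω.ne') this).trans_le bot_le
  · have hmarkov := mul_meas_ge_le_integral_of_nonneg (Filter.Eventually.of_forall hf) hfi t
    calc μ {ω | t < f ω} ≤ μ {ω | t ≤ f ω} := measure_mono fun ω (hω : t < f ω) ↦ hω.le
      _ = ENNReal.ofReal (μ.real {ω | t ≤ f ω}) := (ofReal_measureReal).symm
      _ ≤ ENNReal.ofReal ε := ENNReal.ofReal_le_ofReal (by nlinarith)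

lemma ofReal_one_sub_add_le_measure [IsProbabilityMeasure μ] {s A B : Set Ω} (hs : Aᶜ ∩ Bᶜ ⊆ s)
    {a b : ℝ} (ha : 0 ≤ a) (hb : 0 ≤ b)
    (hA : μ A ≤ ENNReal.ofReal a) (hB : μ B ≤ ENNReal.ofReal b) :
    ENNReal.ofReal (1 - (a + b)) ≤ μ s := by
  have hsc : μ sᶜ ≤ ENNReal.ofReal (a + b) := by
    rw [ENNReal.ofReal_add ha hb]
    refine (measure_mono ?_).trans ((measure_union_le A B).trans (add_le_add hA hB))
    rw [Set.compl_subset_comm, Set.compl_union]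
    exact hs
  calc ENNReal.ofReal (1 - (a + b)) = 1 - ENNReal.ofReal (a + b) := by
        rw [ENNReal.ofReal_sub _ (by positivity), ENNReal.ofReal_one]
    _ ≤ 1 - μ sᶜ := tsub_le_tsub_left hsc 1
    _ ≤ μ s := by
        rw [tsub_le_iff_right, ← measure_univ (μ := μ), ← Set.union_compl_self s]
        exact measure_union_le s sᶜ

end Probability

section Bernoulli

variable {Ω : Type*} [MeasurableSpace Ω] {μ : Measure Ω} {X : Ω → ℝ}

lemma integral_eq_of_bernoulli_s12 (hX : Measurable X) (h01 : ∀ ω, X ω = 0 ∨ X ω = 1)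
    {q : ℝ} (hq : 0 ≤ q) (hP : μ {ω | X ω = 1} = ENNReal.ofReal q) : ∫ ω, X ω ∂μ = q := by
  calc ∫ ω, X ω ∂μ = ∫ ω, (X ⁻¹' {1}).indicator 1 ω ∂μ := by
        congr 1
        funext ω
        rcases h01 ω with h | h <;> simp [Set.indicator, h]
    _ = q := by
        rw [integral_indicator_one (hX (measurableSet_singleton 1)), measureReal_def]
        exact (congrArg ENNReal.toReal hP).trans (ENNReal.toReal_ofReal hq)

variable [IsProbabilityMeasure μ]

lemma variance_le_of_bernoulli (hX : Measurable X) (h01 : ∀ ω, X ω = 0 ∨ X ω = 1)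
    {q : ℝ} (hq : 0 ≤ q) (hP : μ {ω | X ω = 1} = ENNReal.ofReal q) : Var[X; μ] ≤ q := by
  have hrange : ∀ᵐ ω ∂μ, X ω ∈ Set.Icc (0 : ℝ) 1 :=
    Filter.Eventually.of_forall fun ω ↦ by rcases h01 ω with h | h <;> simp [h]
  have := variance_le_sub_mul_sub hrange hX.aemeasurable
  rw [integral_eq_of_bernoulli_s12 hX h01 hq hP] at this
  nlinarith

lemma memLp_two_of_bernoulli (hX : Measurable X) (h01 : ∀ ω, X ω = 0 ∨ X ω = 1) :
    MemLp X 2 μ :=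
  .of_bound hX.aestronglyMeasurable 1 <|
    Filter.Eventually.of_forall fun ω ↦ by rcases h01 ω with h | h <;> simp [h]

end Bernoulli

section Reweighting

variable {ι κ Ω : Type*} [Fintype ι] [MeasurableSpace Ω] {μ : Measure Ω} [IsProbabilityMeasure μ]

/-- Error of the Horvitz–Thompson estimate `∑ γᵢ/pᵢ • aᵢ` of `∑ aᵢ`. -/
noncomputable def reweightingError (γ : ι → Ω → ℝ) (p : ι → ℝ) (a : ι → κ → ℝ) (ω : Ω) (k : κ) :
    ℝ :=
  ∑ i, (γ i ω / p i - 1) * a i k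

variable {γ : ι → Ω → ℝ} {p : ι → ℝ}

lemma integral_sq_sum_reweighted_le (hmeas : ∀ i, Measurable (γ i))
    (h01 : ∀ i ω, γ i ω = 0 ∨ γ i ω = 1) (hp : ∀ i, 0 < p i)
    (hBer : ∀ i, μ {ω | γ i ω = 1} = ENNReal.ofReal (p i)) (hind : iIndepFun γ μ)
    (a : ι → ℝ) : ∫ ω, (∑ i, (γ i ω / p i - 1) * a i) ^ 2 ∂μ ≤ ∑ i, a i ^ 2 / p i := by
  -- The sum is `Y - E Y` for `Y = ∑ aᵢ/pᵢ γᵢ`, so its second moment is `Var Y = ∑ (aᵢ/pᵢ)² Var γᵢ`.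
  set X : ι → Ω → ℝ := fun i ω ↦ a i / p i * γ i ω
  have hXL2 : ∀ i, MemLp (X i) 2 μ := fun i ↦ (memLp_two_of_bernoulli (hmeas i) (h01 i)).const_mul _
  have hmean : μ[∑ i, X i] = ∑ i, a i := by
    simp only [Finset.sum_apply]
    rw [integral_finsetSum _ fun i _ ↦ (hXL2 i).integrable one_le_two]
    refine Finset.sum_congr rfl fun i _ ↦ ?_
    rw [integral_const_mul, integral_eq_of_bernoulli_s12 (hmeas i) (h01 i) (hp i).le (hBer i)]
    field_simp [(hp i).ne']
  have hvar : Var[∑ i, X i; μ] = ∑ i, (a i / p i) ^ 2 * Var[γ i; μ] := by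
    rw [IndepFun.variance_sum (fun i _ ↦ hXL2 i) fun i _ j _ hij ↦
      (hind.indepFun hij).comp (measurable_const_mul _) (measurable_const_mul _)]
    exact Finset.sum_congr rfl fun i _ ↦ variance_const_mul _ _ _
  have hdev : ∀ ω, ∑ i, (γ i ω / p i - 1) * a i = (∑ i, X i) ω - μ[∑ i, X i] := by
    intro ω
    rw [hmean, Finset.sum_apply, ← Finset.sum_sub_distrib]
    exact Finset.sum_congr rfl fun i _ ↦ by ring
  simp_rw [hdev]
  rw [← variance_eq_integral (memLp_finsetSum' _ fun i _ ↦ hXL2 i).aemeasurable, hvar]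
  refine Finset.sum_le_sum fun i _ ↦ ?_
  calc (a i / p i) ^ 2 * Var[γ i; μ] ≤ (a i / p i) ^ 2 * p i := by
        gcongr
        exact variance_le_of_bernoulli (hmeas i) (h01 i) (hp i).le (hBer i)
    _ = a i ^ 2 / p i := by field_simp [(hp i).ne']

lemma memLp_two_reweightingError (hmeas : ∀ i, Measurable (γ i))
    (h01 : ∀ i ω, γ i ω = 0 ∨ γ i ω = 1) (a : ι → κ → ℝ) (k : κ) :
    MemLp (fun ω ↦ reweightingError γ p a ω k) 2 μ :=
  memLp_finsetSum _ fun i _ ↦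
    (((memLp_two_of_bernoulli (hmeas i) (h01 i)).mul_const (p i)⁻¹).sub (memLp_const 1)).mul_const _

variable [Fintype κ]

lemma integral_sum_sq_reweightingError_le (hmeas : ∀ i, Measurable (γ i))
    (h01 : ∀ i ω, γ i ω = 0 ∨ γ i ω = 1) (hp : ∀ i, 0 < p i)
    (hBer : ∀ i, μ {ω | γ i ω = 1} = ENNReal.ofReal (p i)) (hind : iIndepFun γ μ)
    (a : ι → κ → ℝ) :
    ∫ ω, ∑ k, reweightingError γ p a ω k ^ 2 ∂μ ≤ ∑ i, ∑ k, a i k ^ 2 / p i := by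
  rw [integral_finsetSum _ fun k _ ↦ (memLp_two_reweightingError hmeas h01 a k).integrable_sq,
    Finset.sum_comm]
  exact Finset.sum_le_sum fun k _ ↦
    integral_sq_sum_reweighted_le hmeas h01 hp hBer hind fun i ↦ a i k

lemma measure_lt_sum_sq_reweightingError_le (hmeas : ∀ i, Measurable (γ i))
    (h01 : ∀ i ω, γ i ω = 0 ∨ γ i ω = 1) (hp : ∀ i, 0 < p i)
    (hBer : ∀ i, μ {ω | γ i ω = 1} = ENNReal.ofReal (p i)) (hind : iIndepFun γ μ)
    (a : ι → κ → ℝ) {t ε : ℝ} (ht : 0 ≤ t) (h : ∑ i, ∑ k, a i k ^ 2 / p i ≤ ε * t) :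
    μ {ω | t < ∑ k, reweightingError γ p a ω k ^ 2} ≤ ENNReal.ofReal ε :=
  measure_lt_le_ofReal_of_integral_le (fun ω ↦ by positivity)
    (integrable_finsetSum _ fun k _ ↦ (memLp_two_reweightingError hmeas h01 a k).integrable_sq) ht
    ((integral_sum_sq_reweightingError_le hmeas h01 hp hBer hind a).trans h)

end Reweighting

section Regression

variable {ι m : Type*} [Fintype ι] (s : ℝ) (x : ι → m → ℝ) (y : ι → ℝ)

lemma isHermitian_smul_sum_smul_vecMulVec (c : ι → ℝ) :
    (s • ∑ i, c i • vecMulVec (x i) (x i)).IsHermitian :=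
  IsHermitian.ext fun k l ↦ by
    simp only [star_trivial, Matrix.smul_apply, Matrix.sum_apply, vecMulVec_apply, smul_eq_mul,
      mul_comm (x _ k)]

lemma smul_sum_sub_smul_sum_apply {Ω : Type*} (γ : ι → Ω → ℝ) (p : ι → ℝ) (ω : Ω) (k l : m) :
    (s • ∑ i, (γ i ω / p i) • vecMulVec (x i) (x i) - s • ∑ i, vecMulVec (x i) (x i)) k l
      = reweightingError γ p (fun i kl ↦ s * (x i kl.1 * x i kl.2)) ω (k, l) := by
  simp only [reweightingError, Matrix.sub_apply, Matrix.smul_apply, Matrix.sum_apply,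
    vecMulVec_apply, smul_eq_mul, Finset.mul_sum, ← Finset.sum_sub_distrib]
  exact Finset.sum_congr rfl fun i _ ↦ by ring

variable [Fintype m] {e : ι → ℝ} {β : m → ℝ}

lemma smul_sum_smul_sub_mulVec (c : ι → ℝ) (he : ∀ i, e i = y i - x i ⬝ᵥ β) :
    s • ∑ i, c i • y i • x i - (s • ∑ i, c i • vecMulVec (x i) (x i)) *ᵥ β
      = s • ∑ i, c i • e i • x i := by
  simp only [he, smul_mulVec, sum_mulVec, vecMulVec_mulVec, ← smul_sub, ← Finset.sum_sub_distrib,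
    sub_smul, op_smul_eq_smul]

lemma sum_residual_smul_eq_zero {s : ℝ} (hs : s ≠ 0) {S : Matrix m m ℝ}
    (hS : S = s • ∑ i, vecMulVec (x i) (x i)) {b : m → ℝ} (hb : b = s • ∑ i, y i • x i)
    (hβ : S *ᵥ β = b) (he : ∀ i, e i = y i - x i ⬝ᵥ β) : ∑ i, e i • x i = 0 := by
  have := smul_sum_smul_sub_mulVec s x y 1 he
  simp only [Pi.one_apply, one_smul, ← hS, ← hb, hβ, sub_self] at this
  exact (smul_eq_zero.mp this.symm).resolve_left hs

lemma smul_sum_sub_mulVec_eq_reweightingError {Ω : Type*} (γ : ι → Ω → ℝ) (p : ι → ℝ)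
    (he : ∀ i, e i = y i - x i ⬝ᵥ β) (hres : ∑ i, e i • x i = 0) (ω : Ω) :
    s • ∑ i, (γ i ω / p i) • y i • x i - (s • ∑ i, (γ i ω / p i) • vecMulVec (x i) (x i)) *ᵥ β
      = reweightingError γ p (fun i k ↦ s * (e i * x i k)) ω := by
  funext k
  have hk : ∑ i, e i * x i k = 0 := by simpa using congrFun hres k
  rw [smul_sum_smul_sub_mulVec s x y _ he, reweightingError]
  simp only [Pi.smul_apply, Finset.sum_apply, smul_eq_mul, sub_one_mul, Finset.sum_sub_distrib]
  rw [← Finset.mul_sum _ (fun i ↦ e i * x i k) s, hk, mul_zero, sub_zero, Finset.mul_sum]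
  exact Finset.sum_congr rfl fun i _ ↦ by ring

end Regression

section SamplingVariance

variable {ι m : Type*} [Fintype ι] [Fintype m] (s : ℝ) (x : ι → m → ℝ) {r : ℝ} {w p : ι → ℝ}

lemma sum_sum_sq_mul_div_eq (hp : ∀ i, p i = r * w i) (z : ι → ℝ) :
    ∑ i, ∑ k, (s * (z i * x i k)) ^ 2 / p i
      = s ^ 2 * (∑ i, (w i)⁻¹ * (∑ k, x i k ^ 2) * z i ^ 2) / r := by
  simp only [hp, Finset.mul_sum, Finset.sum_mul, Finset.sum_div]
  exact Finset.sum_congr rfl fun i _ ↦ Finset.sum_congr rfl fun k _ ↦ by ring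

lemma sum_sum_sq_mul_mul_div_eq (hp : ∀ i, p i = r * w i) :
    ∑ i, ∑ kl : m × m, (s * (x i kl.1 * x i kl.2)) ^ 2 / p i
      = s ^ 2 * (∑ i, (w i)⁻¹ * (∑ k, x i k ^ 2) ^ 2) / r := by
  simp only [hp, Fintype.sum_prod_type, sq (∑ k, x _ k ^ 2), Finset.sum_mul_sum]
  simp only [Finset.mul_sum, Finset.sum_div]
  exact Finset.sum_congr rfl fun i _ ↦ Finset.sum_congr rfl fun k _ ↦
    Finset.sum_congr rfl fun l _ ↦ by ring

end SamplingVariance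

lemma div_le_mul_sq_of_gt_div {σ r δ L a b : ℝ} (hσ : 0 ≤ σ) (hL : 1 ≤ 2 * L) (hδ0 : 0 < δ)
    (hδ1 : δ ≤ 1) (ha : 0 < a) (hab : a ≤ b) (hr : r > 2 * σ * L / (δ ^ 2 * a ^ 2)) :
    σ / r ≤ δ * b ^ 2 := by
  have hr0 : 0 < r := lt_of_le_of_lt (div_nonneg (by nlinarith) (by positivity)) hr
  rw [gt_iff_lt, div_lt_iff₀ (by positivity)] at hr
  rw [div_le_iff₀ hr0]
  have hδ2 : δ ^ 2 ≤ δ := by nlinarith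
  have : δ ^ 2 * a ^ 2 ≤ δ * b ^ 2 := by gcongr
  nlinarith

lemma div_le_mul_half_sq_of_gt_div {σ r δ L R N c : ℝ} (hσ : 0 ≤ σ) (hL : 1 ≤ 2 * L) (hR : 0 ≤ R)
    (hN : 0 < N) (hc : 0 < c) (hδ0 : 0 < δ) (hδ1 : δ ≤ 1) (hδ : δ > 2 * R * L / (3 * N * c))
    (hr : r > 2 * σ * L / (δ ^ 2 * (c / 2 - R * L / (3 * N * δ)) ^ 2)) :
    σ / r ≤ δ * (c / 2) ^ 2 := by
  refine div_le_mul_sq_of_gt_div hσ hL hδ0 hδ1 ?_ ?_ hr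
  · rw [gt_iff_lt, div_lt_iff₀ (by positivity)] at hδ
    rw [sub_pos, div_lt_iff₀ (by positivity)]
    nlinarith
  · have : 0 ≤ R * L / (3 * N * δ) := by
      apply div_nonneg (mul_nonneg hR (by linarith)) (by positivity)
    linarith

lemma one_le_two_mul_log_s12 {d : ℕ} (hd : 2 ≤ d) : 1 ≤ 2 * Real.log d := by
  have := Real.log_le_log two_pos (by exact_mod_cast hd : (2 : ℝ) ≤ d)
  linarith [Real.log_two_gt_d9]

theorem stmt12_general {n d : ℕ} (hn : 1 ≤ n) (hd : 2 ≤ d)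
    (x : Fin n → Fin d → ℝ) (y : Fin n → ℝ)
    (Sn : Matrix (Fin d) (Fin d) ℝ)
    (hSn : Sn = (n : ℝ)⁻¹ • ∑ i, vecMulVec (x i) (x i))
    (hpd : Sn.PosDef)
    (bn : Fin d → ℝ) (hbn : bn = (n : ℝ)⁻¹ • ∑ i, y i • x i)
    (βhat : Fin d → ℝ) (hβ : βhat = Sn⁻¹ *ᵥ bn)
    (e : Fin n → ℝ) (he : ∀ i, e i = y i - ∑ k, x i k * βhat k)
    (w : Fin n → ℝ) (hw0 : ∀ i, 0 < w i)
    (r : ℝ) (hr : 0 < r)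
    (p : Fin n → ℝ) (hp : ∀ i, p i = r * w i)
    (sS2 : ℝ) (hsS2 : sS2 = ((n : ℝ) ^ 2)⁻¹ * ∑ i, (w i)⁻¹ * (∑ k, x i k ^ 2) ^ 2)
    (sb2 : ℝ) (hsb2 : sb2 = ((n : ℝ) ^ 2)⁻¹ * ∑ i, (w i)⁻¹ * (∑ k, x i k ^ 2) * e i ^ 2)
    (R : ℝ) (hR : R = ⨆ j, ∑ k, x j k ^ 2)
    {Ω : Type} [MeasurableSpace Ω] (μ : Measure Ω) [IsProbabilityMeasure μ]
    (γ : Fin n → Ω → ℝ) (hmeas : ∀ i, Measurable (γ i))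
    (h01 : ∀ i ω, γ i ω = 0 ∨ γ i ω = 1)
    (hBer : ∀ i, μ {ω | γ i ω = 1} = ENNReal.ofReal (p i))
    (hind : iIndepFun γ μ)
    (Ss : Ω → Matrix (Fin d) (Fin d) ℝ)
    (hSs : ∀ ω, Ss ω = (n : ℝ)⁻¹ • ∑ i, (γ i ω / p i) • vecMulVec (x i) (x i))
    (bs : Ω → Fin d → ℝ)
    (hbs : ∀ ω, bs ω = (n : ℝ)⁻¹ • ∑ i, (γ i ω / p i) • y i • x i)
    (δ : ℝ) (hδ0 : 0 < δ) (hδ1 : δ < 1)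
    (hδ : δ > 2 * R * Real.log d / (3 * n * lamMin Sn))
    (hrbig : r > 2 * sS2 * Real.log d /
        (δ ^ 2 * (lamMin Sn / 2 - R * Real.log d / (3 * n * δ)) ^ 2)) :
    ENNReal.ofReal (1 - 2 * δ) ≤
      μ {ω | IsUnit (Ss ω).det ∧
        euclNorm ((Ss ω)⁻¹ *ᵥ bs ω - βhat) ≤
          2 * (lamMin Sn)⁻¹ * δ⁻¹ * Real.sqrt sb2 * (Real.sqrt r)⁻¹ +
            2 * Real.sqrt (2 * Real.log d) * ((lamMin Sn) ^ 2)⁻¹ * (δ ^ 2)⁻¹ *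
              Real.sqrt sS2 * Real.sqrt sb2 * r⁻¹} := by
  have : NeZero d := ⟨by omega⟩
  have hc := hpd.lamMin_pos
  have hp0 : ∀ i, 0 < p i := fun i ↦ hp i ▸ mul_pos hr (hw0 i)
  have hsb2nn : 0 ≤ sb2 := hsb2 ▸ mul_nonneg (by positivity)
    (Finset.sum_nonneg fun i _ ↦ by have := hw0 i; positivity)
  have hsS2nn : 0 ≤ sS2 := hsS2 ▸ mul_nonneg (by positivity)
    (Finset.sum_nonneg fun i _ ↦ by have := hw0 i; positivity)
  have hres := sum_residual_smul_eq_zero x y (by positivity) hSn hbn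
    (by rw [hβ, mulVec_mulVec, mul_nonsing_inv _ hpd.det_pos.ne'.isUnit, one_mulVec]) he
  set V := reweightingError γ p fun i k ↦ (n : ℝ)⁻¹ * (e i * x i k)
  set D := reweightingError γ p fun i (kl : Fin d × Fin d) ↦ (n : ℝ)⁻¹ * (x i kl.1 * x i kl.2)
  have hV (ω : Ω) : bs ω - Ss ω *ᵥ βhat = V ω := by
    rw [hbs, hSs]
    exact smul_sum_sub_mulVec_eq_reweightingError _ x y γ p he hres ω
  have hD (ω : Ω) : ∑ k, ∑ l, (Ss ω - Sn) k l ^ 2 = ∑ kl, D ω kl ^ 2 := by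
    rw [Fintype.sum_prod_type, hSs, hSn]
    simp only [smul_sum_sub_smul_sum_apply, D]
  rw [two_mul]
  refine ofReal_one_sub_add_le_measure (A := {ω | sb2 / (δ ^ 2 * r) < ∑ k, V ω k ^ 2})
    (B := {ω | (lamMin Sn / 2) ^ 2 < ∑ kl, D ω kl ^ 2}) ?_ hδ0.le hδ0.le ?_ ?_
  · rintro ω ⟨hVω, hDω⟩
    obtain ⟨hdet, hbound⟩ := isUnit_det_and_euclNorm_inv_mulVec_sub_le hpd.1
      (hSs ω ▸ isHermitian_smul_sum_smul_vecMulVec _ x _) hc ((hD ω).trans_le (not_lt.mp hDω))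
      hδ0 hr.le (by rw [hV]; exact not_lt.mp hVω)
    exact ⟨hdet, hbound.trans (le_add_of_nonneg_right (by positivity))⟩
  · refine measure_lt_sum_sq_reweightingError_le hmeas h01 hp0 hBer hind _ (by positivity) ?_
    rw [sum_sum_sq_mul_div_eq _ _ hp, inv_pow, ← hsb2,
      show δ * (sb2 / (δ ^ 2 * r)) = sb2 / r / δ by field_simp]
    exact le_div_self (by positivity) hδ0 hδ1.le
  · refine measure_lt_sum_sq_reweightingError_le hmeas h01 hp0 hBer hind _ (by positivity) ?_
    rw [sum_sum_sq_mul_mul_div_eq _ _ hp, inv_pow, ← hsS2]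
    exact div_le_mul_half_sq_of_gt_div hsS2nn (one_le_two_mul_log_s12 hd)
      (hR ▸ Real.iSup_nonneg fun j ↦ by positivity) (Nat.cast_pos.mpr hn) hc hδ0 hδ1.le hδ hrbig

/-- equation (A.9) in the proof of Theorem 1: with probability at least
`1 − 2δ`, the subsampled matrix `Σ_s` is invertible and
`‖β̃ − β̂_n‖ ≤ C₁ r^{−1/2} + C₂ r^{−1}`, with `C₁ = 2 λ_min(Σ_n)⁻¹ δ⁻¹ σ_b` and
`C₂ = 2 √(2 log d) λ_min(Σ_n)⁻² δ⁻² σ_Σ σ_b`. -/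
theorem stmt12 {n d : ℕ} (hn : 1 ≤ n) (hd : 2 ≤ d)
    (x : Fin n → Fin d → ℝ) (y : Fin n → ℝ)
    (Sn : Matrix (Fin d) (Fin d) ℝ)
    (hSn : Sn = (n : ℝ)⁻¹ • ∑ i, vecMulVec (x i) (x i))
    (hpd : Sn.PosDef)
    (bn : Fin d → ℝ) (hbn : bn = (n : ℝ)⁻¹ • ∑ i, y i • x i)
    (βhat : Fin d → ℝ) (hβ : βhat = Sn⁻¹ *ᵥ bn)
    (e : Fin n → ℝ) (he : ∀ i, e i = y i - ∑ k, x i k * βhat k)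
    (w : Fin n → ℝ) (hw0 : ∀ i, 0 < w i) (hw1 : ∑ i, w i = 1)
    (r : ℝ) (hr : 0 < r)
    (p : Fin n → ℝ) (hp : ∀ i, p i = r * w i) (hp1 : ∀ i, p i ≤ 1)
    (sS2 : ℝ) (hsS2 : sS2 = ((n : ℝ) ^ 2)⁻¹ * ∑ i, (w i)⁻¹ * (∑ k, x i k ^ 2) ^ 2)
    (sb2 : ℝ) (hsb2 : sb2 = ((n : ℝ) ^ 2)⁻¹ * ∑ i, (w i)⁻¹ * (∑ k, x i k ^ 2) * e i ^ 2)
    (R : ℝ) (hR : R = ⨆ j, ∑ k, x j k ^ 2)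
    {Ω : Type} [MeasurableSpace Ω] (μ : Measure Ω) [IsProbabilityMeasure μ]
    (γ : Fin n → Ω → ℝ) (hmeas : ∀ i, Measurable (γ i))
    (h01 : ∀ i ω, γ i ω = 0 ∨ γ i ω = 1)
    (hBer : ∀ i, μ {ω | γ i ω = 1} = ENNReal.ofReal (p i))
    (hind : iIndepFun γ μ)
    (Ss : Ω → Matrix (Fin d) (Fin d) ℝ)
    (hSs : ∀ ω, Ss ω = (n : ℝ)⁻¹ • ∑ i, (γ i ω / p i) • vecMulVec (x i) (x i))
    (bs : Ω → Fin d → ℝ)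
    (hbs : ∀ ω, bs ω = (n : ℝ)⁻¹ • ∑ i, (γ i ω / p i) • y i • x i)
    (δ : ℝ) (hδ0 : 0 < δ) (hδ1 : δ < 1)
    (hδ : δ > 2 * R * Real.log d / (3 * n * lamMin Sn))
    (hrbig : r > 2 * sS2 * Real.log d /
        (δ ^ 2 * (lamMin Sn / 2 - R * Real.log d / (3 * n * δ)) ^ 2)) :
    ENNReal.ofReal (1 - 2 * δ) ≤
      μ {ω | IsUnit (Ss ω).det ∧
        euclNorm ((Ss ω)⁻¹ *ᵥ bs ω - βhat) ≤
          2 * (lamMin Sn)⁻¹ * δ⁻¹ * Real.sqrt sb2 * (Real.sqrt r)⁻¹ +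
            2 * Real.sqrt (2 * Real.log d) * ((lamMin Sn) ^ 2)⁻¹ * (δ ^ 2)⁻¹ *
              Real.sqrt sS2 * Real.sqrt sb2 * r⁻¹} :=
  stmt12_general hn hd x y Sn hSn hpd bn hbn βhat hβ e he w hw0 r hr p hp sS2 hsS2 sb2 hsb2 R hR μ γ
    hmeas h01 hBer hind Ss hSs bs hbs δ hδ0 hδ1 hδ hrbig
end
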